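/- arXiv:2603.05316 — 6 statements merged into one kernel-verified Lean document; each statement's English description precedes it below -/
import Mathlib

section
/- Let g : ℝ → ℝ be twice continuously differentiable. Then for every s ∈ ℝ, the limit as t → s with t ≠ s (taken over t in a punctured neighborhood of s, where γ(t) ≠ γ(s)) of g'(s)·Re( γ'(s)/(γ(s) − γ(t)) ) − g'(t)·Re( γ'(t)/(γ(s) − γ(t)) ) equals g''(s). (With g = f ∘ γ for f smooth near the curve, this says that the symmetrized interaction kernel ∂_s f(z) Re(τ(z)/(z−w)) − ∂_s f(w) Re(τ(w)/(z−w)) extends continuously to the diagonal w = z = γ(s) with value ∂_s² f(z) = g''(s), where τ(γ(t)) = γ'(t) is the unit tangent.) -/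
open scoped Topology

open Complex Filter

private lemma div_div_aux (a b c : ℂ) (hc : c ≠ 0) : (a / c) / (b / c) = a / b := by
  rcases eq_or_ne b 0 with rfl | hb
  · simp
  · field_simp

private lemma slope_eq_aux (f : ℝ → ℂ) (s t : ℝ) :
    slope f s t = (f s - f t) / ((s - t : ℝ) : ℂ) := by
  rcases eq_or_ne t s with rfl | h
  · simp [slope]
  · have h1 : ((t - s : ℝ) : ℂ) ≠ 0 := by
      exact_mod_cast sub_ne_zero.mpr h
    have h2 : ((s - t : ℝ) : ℂ) ≠ 0 := by
      exact_mod_cast sub_ne_zero.mpr (Ne.symm h)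
    simp only [slope, vsub_eq_sub, Complex.real_smul]
    push_cast at h1 h2 ⊢
    field_simp
    ring

/-- The symmetrized interaction kernel extends continuously to the diagonal:
for `g : ℝ → ℝ` of class `C²`,
`g'(s)·Re(γ'(s)/(γ(s)−γ(t))) − g'(t)·Re(γ'(t)/(γ(s)−γ(t))) → g''(s)` as `t → s`, `t ≠ s`. -/
theorem kernel_diagonal_limit
    (l : ℝ) (hl : 0 < l)
    (γ : ℝ → ℂ) (hγ : ContDiff ℝ 2 γ) (hper : Function.Periodic γ l)
    (hinj : Set.InjOn γ (Set.Ico 0 l)) (hunit : ∀ t, ‖deriv γ t‖ = 1)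
    (g : ℝ → ℝ) (hg : ContDiff ℝ 2 g) (s : ℝ) :
    Filter.Tendsto
      (fun t => deriv g s * (deriv γ s / (γ s - γ t)).re
        - deriv g t * (deriv γ t / (γ s - γ t)).re)
      (𝓝[≠] s) (𝓝 (deriv (deriv g) s)) := by
  -- basic differentiability facts
  have hγ2 : ContDiff ℝ (1 + 1) γ := by norm_num; exact hγ
  have hg2 : ContDiff ℝ (1 + 1) g := by norm_num; exact hg
  have hγd : ContDiff ℝ 1 (deriv γ) := (contDiff_succ_iff_deriv.mp hγ2).2.2
  have hgd : ContDiff ℝ 1 (deriv g) := (contDiff_succ_iff_deriv.mp hg2).2.2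
  have hγ'' : HasDerivAt (deriv γ) (deriv (deriv γ) s) s :=
    ((hγd.differentiable one_ne_zero) s).hasDerivAt
  have hg'' : HasDerivAt (deriv g) (deriv (deriv g) s) s :=
    ((hgd.differentiable one_ne_zero) s).hasDerivAt
  have hγ' : HasDerivAt γ (deriv γ s) s := ((hγ.differentiable two_ne_zero) s).hasDerivAt
  have hγ's : deriv γ s ≠ 0 := by
    intro h; have := hunit s; rw [h] at this; simp at this
  -- orthogonality: Re(γ''(s) * conj (γ'(s))) = 0
  have hortho : ((deriv (deriv γ) s) * (starRingEnd ℂ) (deriv γ s)).re = 0 := by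
    have hconj : HasDerivAt (fun t => (starRingEnd ℂ) (deriv γ t))
        ((starRingEnd ℂ) (deriv (deriv γ) s)) s := by
      exact (Complex.conjCLE.hasFDerivAt.comp_hasDerivAt s hγ'')
    have hprod : HasDerivAt (fun t => deriv γ t * (starRingEnd ℂ) (deriv γ t))
        (deriv (deriv γ) s * (starRingEnd ℂ) (deriv γ s)
          + deriv γ s * (starRingEnd ℂ) (deriv (deriv γ) s)) s := hγ''.mul hconj
    have hconst : (fun t => deriv γ t * (starRingEnd ℂ) (deriv γ t)) = fun _ => (1 : ℂ) := by
      funext t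
      rw [Complex.mul_conj]
      norm_cast
      rw [Complex.normSq_eq_norm_sq, hunit t]; norm_num
    rw [hconst] at hprod
    have h0 : deriv (deriv γ) s * (starRingEnd ℂ) (deriv γ s)
        + deriv γ s * (starRingEnd ℂ) (deriv (deriv γ) s) = 0 :=
      hprod.unique (hasDerivAt_const s 1)
    have := congrArg Complex.re h0
    simp only [Complex.add_re, Complex.zero_re, Complex.mul_re, Complex.conj_re,
      Complex.conj_im] at this ⊢
    linarith
  -- the auxiliary function h = g' · γ'
  set h : ℝ → ℂ := fun t => ((deriv g t : ℝ) : ℂ) * deriv γ t with hh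
  set L : ℂ := ((deriv (deriv g) s : ℝ) : ℂ) * deriv γ s + ((deriv g s : ℝ) : ℂ) * deriv (deriv γ) s with hL
  have hhd : HasDerivAt h L s := hg''.ofReal_comp.mul hγ''
  -- limits of the two slopes
  have hA : Tendsto (fun t => (h s - h t) / ((s - t : ℝ) : ℂ)) (𝓝[≠] s) (𝓝 L) :=
    (hasDerivAt_iff_tendsto_slope.mp hhd).congr fun t => slope_eq_aux h s t
  have hB : Tendsto (fun t => (γ s - γ t) / ((s - t : ℝ) : ℂ)) (𝓝[≠] s) (𝓝 (deriv γ s)) :=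
    (hasDerivAt_iff_tendsto_slope.mp hγ').congr fun t => slope_eq_aux γ s t
  have hAB : Tendsto (fun t => ((h s - h t) / ((s - t : ℝ) : ℂ))
      / ((γ s - γ t) / ((s - t : ℝ) : ℂ))) (𝓝[≠] s) (𝓝 (L / deriv γ s)) :=
    hA.div hB hγ's
  have hre : Tendsto (fun t => (((h s - h t) / ((s - t : ℝ) : ℂ))
      / ((γ s - γ t) / ((s - t : ℝ) : ℂ))).re) (𝓝[≠] s) (𝓝 ((L / deriv γ s).re)) :=
    (Complex.continuous_re.continuousAt).tendsto.comp hAB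
  -- identify the limit value
  have hval : (L / deriv γ s).re = deriv (deriv g) s := by
    have h1 : L / deriv γ s
        = ((deriv (deriv g) s : ℝ) : ℂ) + ((deriv g s : ℝ) : ℂ) * (deriv (deriv γ) s / deriv γ s) := by
      field_simp [hL]
      rw [hL]; ring
    have hns : Complex.normSq (deriv γ s) = 1 := by
      rw [← Complex.sq_norm, hunit s]; norm_num
    have h2 : (deriv (deriv γ) s / deriv γ s).re = 0 := by
      rw [Complex.div_re, hns]
      simp only [Complex.mul_re, Complex.conj_re, Complex.conj_im] at hortho
      simp only [div_one]
      linarith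
    rw [h1]
    simp [Complex.add_re, Complex.re_ofReal_mul, h2]
  rw [← hval]
  refine hre.congr' ?_
  filter_upwards [self_mem_nhdsWithin] with t (ht : t ≠ s)
  have hst : ((s - t : ℝ) : ℂ) ≠ 0 := by
    exact_mod_cast sub_ne_zero.mpr (Ne.symm ht)
  rw [div_div_aux _ _ _ hst]
  rw [hh]
  simp only []
  rw [show ((deriv g s : ℝ) : ℂ) * deriv γ s - ((deriv g t : ℝ) : ℂ) * deriv γ t
      = (((deriv g s : ℝ) : ℂ) * deriv γ s - ((deriv g t : ℝ) : ℂ) * deriv γ t) from rfl]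
  rw [sub_div, Complex.sub_re, mul_div_assoc, mul_div_assoc,
    Complex.re_ofReal_mul, Complex.re_ofReal_mul]
end

section
/- There exists a constant M = M(γ) > 0 such that for all s, t ∈ ℝ with γ(s) ≠ γ(t): |Im( γ'(s) / (γ(s) − γ(t)) )| ≤ M. (This is the finiteness of the constant C₁(γ) used in the Dyson-type potential estimate.) -/
open Set

set_option maxHeartbeats 1000000 in
/-- Finiteness of the constant `C₁(γ)`: the imaginary part of `γ'(s)/(γ(s) − γ(t))`
is uniformly bounded over all `s, t` with `γ(s) ≠ γ(t)`. -/
theorem im_kernel_bounded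
    (l : ℝ) (hl : 0 < l)
    (γ : ℝ → ℂ) (hγ : ContDiff ℝ 2 γ) (hper : Function.Periodic γ l)
    (hinj : Set.InjOn γ (Set.Ico 0 l)) (hunit : ∀ t, ‖deriv γ t‖ = 1) :
    ∃ M > 0, ∀ s t : ℝ, γ s ≠ γ t →
      |(deriv γ s / (γ s - γ t)).im| ≤ M := by
  -- basic differentiability facts
  have hdiff : Differentiable ℝ γ := hγ.differentiable (by norm_num)
  have hγ' : ContDiff ℝ 1 (deriv γ) := by
    have h2 : ContDiff ℝ ((1:ℕ∞)+1) γ := by norm_num at hγ ⊢; exact hγ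
    exact (contDiff_succ_iff_deriv.mp h2).2.2
  have hdiff' : Differentiable ℝ (deriv γ) := hγ'.differentiable (by norm_num)
  have hcont'' : Continuous (deriv (deriv γ)) := hγ'.continuous_deriv le_rfl
  -- periodicity of derivatives
  have hperder : ∀ f : ℝ → ℂ, Function.Periodic f l → Function.Periodic (deriv f) l := by
    intro f hf x
    have h1 : deriv (fun y => f (y + l)) x = deriv f (x + l) := deriv_comp_add_const f l x
    rw [← h1]; congr 1; ext y; exact hf y
  have hper' : Function.Periodic (deriv γ) l := hperder γ hper
  have hper'' : Function.Periodic (deriv (deriv γ)) l := hperder _ hper'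
  -- uniform bound `K` on the second derivative
  obtain ⟨x₀, hx₀, hmax⟩ := isCompact_Icc.exists_isMaxOn (nonempty_Icc.mpr hl.le)
    (hcont''.norm.continuousOn (s := Icc 0 l))
  set K := ‖deriv (deriv γ) x₀‖ with hKdef
  have hK0 : 0 ≤ K := norm_nonneg _
  have hKbound : ∀ t, ‖deriv (deriv γ) t‖ ≤ K := by
    intro t
    have ht' : t - (⌊t/l⌋ : ℤ) * l ∈ Icc (0:ℝ) l := by
      constructor
      · exact Int.sub_floor_div_mul_nonneg t hl
      · exact (Int.sub_floor_div_mul_lt t hl).le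
    calc ‖deriv (deriv γ) t‖ = ‖deriv (deriv γ) (t - (⌊t/l⌋ : ℤ) * l)‖ := by
          rw [hper''.sub_int_mul_eq]
      _ ≤ K := hmax ht'
  -- Lipschitz bound for the first derivative
  have hlip : ∀ s t : ℝ, ‖deriv γ t - deriv γ s‖ ≤ K * |t - s| := by
    intro s t
    have := Convex.norm_image_sub_le_of_norm_deriv_le (f := deriv γ) (s := univ)
      (fun x _ => hdiff' x) (fun x _ => hKbound x) convex_univ (mem_univ s) (mem_univ t)
    simpa [Real.norm_eq_abs] using this
  -- Taylor-type estimate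
  have htaylor : ∀ s t : ℝ, ‖γ t - γ s - (t - s) • deriv γ s‖ ≤ K * (t-s)^2 := by
    intro s t
    set d := deriv γ s with hd
    have habs : ∀ u ∈ segment ℝ s t, |u - s| ≤ |t - s| := by
      intro u hu
      rw [segment_eq_uIcc, uIcc, mem_Icc] at hu
      rw [abs_sub_le_iff]
      constructor
      · have := hu.2; have := min_le_left s t; have := le_abs_self (t - s)
        have h2 : max s t - min s t = |t - s| := by
          rcases le_total s t with h | h
          · rw [max_eq_right h, min_eq_left h, abs_of_nonneg (by linarith)]
          · rw [max_eq_left h, min_eq_right h, abs_of_nonpos (by linarith)]; ring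
        linarith
      · have := hu.1; have := le_max_left s t
        have h2 : max s t - min s t = |t - s| := by
          rcases le_total s t with h | h
          · rw [max_eq_right h, min_eq_left h, abs_of_nonneg (by linarith)]
          · rw [max_eq_left h, min_eq_right h, abs_of_nonpos (by linarith)]; ring
        linarith
    have hg : ∀ u ∈ segment ℝ s t,
        HasDerivWithinAt (fun v => γ v - v • d) (deriv γ u - d) (segment ℝ s t) u := by
      intro u _
      have h1 : HasDerivAt γ (deriv γ u) u := (hdiff u).hasDerivAt
      have h2 : HasDerivAt (fun v : ℝ => v • d) ((1:ℝ) • d) u :=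
        (hasDerivAt_id u).smul_const d
      rw [one_smul] at h2
      exact (h1.sub h2).hasDerivWithinAt
    have hbound : ∀ u ∈ segment ℝ s t, ‖deriv γ u - d‖ ≤ K * |t - s| := by
      intro u hu
      calc ‖deriv γ u - d‖ ≤ K * |u - s| := hlip s u
        _ ≤ K * |t - s| := by
            have := habs u hu
            nlinarith [abs_nonneg (u - s)]
    have := Convex.norm_image_sub_le_of_norm_hasDerivWithin_le hg hbound
      (convex_segment s t) (left_mem_segment ℝ s t) (right_mem_segment ℝ s t)
    have heq : (γ t - t • d) - (γ s - s • d) = γ t - γ s - (t - s) • d := by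
      rw [sub_smul]; abel
    rw [heq, Real.norm_eq_abs] at this
    calc ‖γ t - γ s - (t - s) • d‖ ≤ K * |t - s| * |t - s| := this
      _ = K * (t - s)^2 := by rw [mul_assoc, abs_mul_abs_self]; ring
  -- local chord bound
  set δ := min (l/2) (1/(2*(K+1))) with hδdef
  have hδ0 : 0 < δ := lt_min (by linarith) (by positivity)
  have hδl2 : δ ≤ l/2 := min_le_left _ _
  have hKδ : K * δ ≤ 1/2 := by
    have h1 : δ ≤ 1/(2*(K+1)) := min_le_right _ _
    have h2 : K * δ ≤ K * (1/(2*(K+1))) := by nlinarith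
    have h3 : K * (1/(2*(K+1))) ≤ 1/2 := by
      rw [mul_one_div, div_le_div_iff₀ (by positivity) (by norm_num : (0:ℝ) < 2)]
      nlinarith
    linarith
  have hlocal : ∀ s t : ℝ, |t - s| ≤ δ → |t - s|/2 ≤ ‖γ t - γ s‖ := by
    intro s t h
    have h1 := htaylor s t
    have h2 : ‖(t-s) • deriv γ s‖ = |t-s| := by
      rw [norm_smul, hunit s, Real.norm_eq_abs, mul_one]
    have h3 : ‖(t-s) • deriv γ s‖ ≤ ‖γ t - γ s‖ + ‖γ t - γ s - (t-s) • deriv γ s‖ := by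
      have := norm_sub_le (γ t - γ s) (γ t - γ s - (t-s) • deriv γ s)
      simpa using this
    rw [h2] at h3
    have h4 : K * (t - s)^2 ≤ (1/2) * |t - s| := by
      have : (t-s)^2 = |t-s| * |t-s| := by rw [abs_mul_abs_self]; ring
      rw [this]
      nlinarith [abs_nonneg (t - s)]
    linarith
  -- global minimum over the "far" region
  set S : Set (ℝ × ℝ) := (Icc (0:ℝ) l ×ˢ Icc (0:ℝ) l) ∩
    {p | δ ≤ |p.1 - p.2| ∧ |p.1 - p.2| ≤ l - δ} with hSdef
  have hScl : IsClosed S := by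
    apply IsClosed.inter (isClosed_Icc.prod isClosed_Icc)
    have hc : Continuous fun p : ℝ × ℝ => |p.1 - p.2| :=
      (continuous_fst.sub continuous_snd).abs
    exact (isClosed_le continuous_const hc).inter (isClosed_le hc continuous_const)
  have hScompact : IsCompact S :=
    (isCompact_Icc.prod isCompact_Icc).of_isClosed_subset hScl inter_subset_left
  have hSne : S.Nonempty := by
    refine ⟨(0, δ), ⟨⟨le_rfl, hl.le⟩, ⟨hδ0.le, by linarith⟩⟩, ?_, ?_⟩ <;>
      simp only [abs_sub_comm, abs_of_nonneg hδ0.le, zero_sub, abs_neg] <;> linarith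
  obtain ⟨p, hpS, hpmin⟩ := hScompact.exists_isMinOn hSne
    (Continuous.continuousOn (by fun_prop : Continuous fun p : ℝ × ℝ => ‖γ p.1 - γ p.2‖))
  set m := ‖γ p.1 - γ p.2‖ with hmdef
  have hm0 : 0 < m := by
    rw [hmdef, norm_pos_iff, sub_ne_zero]
    obtain ⟨⟨ha, hb⟩, h3, h4⟩ := hpS
    intro heq
    have hγl : γ l = γ 0 := by simpa using hper 0
    rcases ha.2.lt_or_eq with hal | hal <;> rcases hb.2.lt_or_eq with hbl | hbl
    · have := hinj ⟨ha.1, hal⟩ ⟨hb.1, hbl⟩ heq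
      rw [this] at h3; simp at h3; linarith
    · rw [hbl, hγl] at heq
      have := hinj ⟨ha.1, hal⟩ ⟨le_rfl, hl⟩ heq
      rw [this, hbl] at h4; rw [abs_of_nonpos (by linarith)] at h4; linarith
    · rw [hal, hγl] at heq
      have := hinj ⟨le_rfl, hl⟩ ⟨hb.1, hbl⟩ heq
      rw [← this, hal] at h4; rw [abs_of_nonneg (by linarith)] at h4; linarith
    · rw [hal, hbl] at h3; simp at h3; linarith
  have hmglobal : ∀ a b : ℝ, a ∈ Icc 0 l → b ∈ Icc 0 l → δ ≤ |a-b| → |a-b| ≤ l - δ →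
      m ≤ ‖γ a - γ b‖ := by
    intro a b ha hb h1 h2
    have hmem : (a, b) ∈ S := by rw [hSdef]; exact ⟨⟨ha, hb⟩, h1, h2⟩
    simpa using hpmin hmem
  -- chord bound for nearby parameters
  set c := min (1/2 : ℝ) (2*m/l) with hcdef
  have hc0 : 0 < c := lt_min (by norm_num) (by positivity)
  have hc12 : c ≤ 1/2 := min_le_left _ _
  have hcm : c * (l/2) ≤ m := by
    have h1 : c ≤ 2*m/l := min_le_right _ _
    have h2 : c * (l/2) ≤ (2*m/l) * (l/2) := by nlinarith
    have h3 : (2*m/l) * (l/2) = m := by field_simp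
    linarith
  have hchord : ∀ s u : ℝ, |s - u| ≤ l/2 → c * |s - u| ≤ ‖γ s - γ u‖ := by
    intro s u hsu
    rcases le_total |s - u| δ with hcase | hcase
    · have h1 := hlocal u s (by rwa [] : |s - u| ≤ δ)
      rw [abs_sub_comm] at hsu
      calc c * |s - u| ≤ (1/2) * |s - u| := by nlinarith [abs_nonneg (s - u)]
        _ ≤ ‖γ s - γ u‖ := by linarith [h1]
    · -- far case : reduce to the fundamental domain
      set n : ℤ := ⌊s/l⌋ with hn
      set a := s - (n:ℝ) * l with hadef
      set b := u - (n:ℝ) * l with hbdef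
      have hga : γ a = γ s := hper.sub_int_mul_eq n
      have hgb : γ b = γ u := hper.sub_int_mul_eq n
      have hab : a - b = s - u := by rw [hadef, hbdef]; ring
      have ha0 : 0 ≤ a := Int.sub_floor_div_mul_nonneg s hl
      have hal : a < l := Int.sub_floor_div_mul_lt s hl
      have habs : |a - b| = |s - u| := by rw [hab]
      have hfar : δ ≤ |a - b| := by rw [habs]; exact hcase
      have hnear : |a - b| ≤ l/2 := by rw [habs]; exact hsu
      have hkey : m ≤ ‖γ a - γ b‖ := by
        rcases le_or_gt 0 b with hb0 | hb0
        · rcases le_or_gt b l with hbl | hbl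
          · exact hmglobal a b ⟨ha0, hal.le⟩ ⟨hb0, hbl⟩ hfar (by linarith)
          · -- b > l : use b - l
            have hbb : γ (b - l) = γ b := by
              have h := hper (b - l); simp at h; exact h.symm
            have hba : b - a ≤ l/2 := by
              have := abs_le.mp hnear; linarith [this.1]
            have hba2 : δ ≤ b - a := by
              rw [abs_sub_comm, abs_of_nonneg (by linarith)] at hfar; linarith
            have h1 : a - (b - l) = l - (b - a) := by ring
            have h2 : |a - (b - l)| = l - (b - a) := by
              rw [h1, abs_of_nonneg (by linarith)]
            have := hmglobal a (b - l) ⟨ha0, hal.le⟩ ⟨by linarith, by linarith⟩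
              (by rw [h2]; linarith) (by rw [h2]; linarith)
            rwa [hbb] at this
        · -- b < 0 : use b + l
          have hbb : γ (b + l) = γ b := hper b
          have hab2 : a - b ≤ l/2 := by
            have := abs_le.mp hnear; linarith [this.2]
          have hab3 : δ ≤ a - b := by
            rw [abs_of_nonneg (by linarith)] at hfar; linarith
          have h2 : |a - (b + l)| = l - (a - b) := by
            rw [abs_of_nonpos (by linarith)]; ring
          have := hmglobal a (b + l) ⟨ha0, hal.le⟩ ⟨by linarith, by linarith⟩
            (by rw [h2]; linarith) (by rw [h2]; linarith)
          rwa [hbb] at this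
      calc c * |s - u| ≤ c * (l/2) := by nlinarith [abs_nonneg (s-u)]
        _ ≤ m := hcm
        _ ≤ ‖γ a - γ b‖ := hkey
        _ = ‖γ s - γ u‖ := by rw [hga, hgb]
  -- final assembly
  refine ⟨K / c^2 + 1, by positivity, fun s t hst => ?_⟩
  set n : ℤ := round ((s - t)/l) with hn
  set u := t + (n:ℝ) * l with hudef
  have hu : γ u = γ t := by simpa using (hper.int_mul n) t
  have hsu : |s - u| ≤ l/2 := by
    have h1 : |(s - t)/l - (n:ℝ)| ≤ 1/2 := abs_sub_round ((s-t)/l)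
    have h2 : s - u = l * ((s - t)/l - (n:ℝ)) := by
      rw [hudef]; field_simp; ring
    rw [h2, abs_mul, abs_of_pos hl]
    nlinarith
  have hne : γ s ≠ γ u := by rw [hu]; exact hst
  have hsune : s ≠ u := fun h => hne (by rw [h])
  set w := γ s - γ u with hwdef
  have hw0 : w ≠ 0 := sub_ne_zero.mpr hne
  have hwnorm : c * |s - u| ≤ ‖w‖ := hchord s u hsu
  have hsu0 : 0 < |s - u| := abs_pos.mpr (sub_ne_zero.mpr hsune)
  set d := deriv γ s with hd
  set E := γ u - γ s - (u - s) • d with hEdef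
  have hE : ‖E‖ ≤ K * (u - s)^2 := htaylor s u
  have hweq : w = -E - (u - s) • d := by rw [hwdef, hEdef]; abel
  -- numerator identity
  have hnum : (d * (starRingEnd ℂ) w).im = -((d * (starRingEnd ℂ) E).im) := by
    have h1 : d * (starRingEnd ℂ) w =
        -(d * (starRingEnd ℂ) E) - ((u - s : ℝ) : ℂ) * (Complex.normSq d : ℂ) := by
      rw [hweq, ← Complex.mul_conj d]
      simp only [map_sub, map_neg, Complex.real_smul, map_mul, Complex.conj_ofReal]
      ring
    rw [h1]
    simp [Complex.sub_im, Complex.neg_im, Complex.mul_im, Complex.ofReal_re, Complex.ofReal_im]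
  have hnumbound : |(d * (starRingEnd ℂ) w).im| ≤ K * (u - s)^2 := by
    rw [hnum, abs_neg]
    calc |(d * (starRingEnd ℂ) E).im| ≤ ‖d * (starRingEnd ℂ) E‖ := Complex.abs_im_le_norm _
      _ = ‖d‖ * ‖E‖ := by rw [norm_mul, RCLike.norm_conj]
      _ = ‖E‖ := by rw [hd, hunit s, one_mul]
      _ ≤ K * (u - s)^2 := hE
  -- the division formula
  have hdiv : (d / w).im = (d * (starRingEnd ℂ) w).im / Complex.normSq w := by
    rw [Complex.div_im, Complex.mul_im, Complex.conj_re, Complex.conj_im]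
    ring
  have hnormSq : Complex.normSq w = ‖w‖^2 := by
    rw [Complex.normSq_eq_norm_sq]
  have hwlow : c^2 * (u - s)^2 ≤ Complex.normSq w := by
    rw [hnormSq]
    have h1 : (c * |s - u|)^2 ≤ ‖w‖^2 := by
      apply sq_le_sq' <;> nlinarith [norm_nonneg w, abs_nonneg (s - u), hc0.le]
    calc c^2 * (u - s)^2 = (c * |s - u|)^2 := by
          rw [mul_pow, sq_abs]; ring_nf
      _ ≤ ‖w‖^2 := h1
  have hgoal : |(d / w).im| ≤ K / c^2 := by
    rw [hdiv, abs_div, abs_of_nonneg (Complex.normSq_nonneg w)]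
    rw [div_le_div_iff₀ (Complex.normSq_pos.mpr hw0) (by positivity)]
    calc |(d * (starRingEnd ℂ) w).im| * c^2 ≤ (K * (u - s)^2) * c^2 := by
          nlinarith [sq_nonneg c]
      _ = K * (c^2 * (u - s)^2) := by ring
      _ ≤ K * Complex.normSq w := by nlinarith
  calc |(deriv γ s / (γ s - γ t)).im| = |(d / w).im| := by rw [hwdef, hu, hd]
    _ ≤ K / c^2 := hgoal
    _ ≤ K / c^2 + 1 := by linarith
end

section
/- There exists a constant M = M(γ) > 0 such that for all s, t ∈ ℝ with γ(s) ≠ γ(t): |Re( (γ''(s) − γ''(t)) / (γ(s) − γ(t)) )| ≤ M. (This is the finiteness of the constant C₂(γ) used in the Dyson-type potential estimate.) -/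
open Set

private lemma periodic_deriv'' {f : ℝ → ℂ} {c : ℝ} (hf : Function.Periodic f c) :
    Function.Periodic (deriv f) c := fun x => by
  have h1 : (fun y : ℝ => f (y + c)) = f := funext fun y => hf y
  rw [← deriv_comp_add_const f c x, h1]

private lemma periodic_bound'' {l : ℝ} (hl : 0 < l) {f : ℝ → ℂ} (hf : Function.Periodic f l)
    (hc : Continuous f) : ∃ C, ∀ x, ‖f x‖ ≤ C := by
  obtain ⟨C, hC⟩ := isCompact_Icc.exists_bound_of_continuousOn
    (s := Icc (0:ℝ) l) hc.continuousOn
  refine ⟨C, fun x => ?_⟩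
  have h0 : f x = f (x - ⌊x / l⌋ * l) := (hf.sub_int_mul_eq _).symm
  rw [h0]
  exact hC _ ⟨Int.sub_floor_div_mul_nonneg x hl, le_of_lt (Int.sub_floor_div_mul_lt x hl)⟩

private lemma inj_half'' {l : ℝ} (hl : 0 < l) {γ : ℝ → ℂ} (hper : Function.Periodic γ l)
    (hinj : Set.InjOn γ (Set.Ico 0 l)) {s t : ℝ} (hd : |s - t| ≤ l / 2)
    (he : γ s = γ t) : s = t := by
  have hs1 : s - ⌊s / l⌋ * l ∈ Ico (0:ℝ) l :=
    ⟨Int.sub_floor_div_mul_nonneg s hl, Int.sub_floor_div_mul_lt s hl⟩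
  have ht1 : t - ⌊t / l⌋ * l ∈ Ico (0:ℝ) l :=
    ⟨Int.sub_floor_div_mul_nonneg t hl, Int.sub_floor_div_mul_lt t hl⟩
  have he' : γ (s - ⌊s / l⌋ * l) = γ (t - ⌊t / l⌋ * l) := by
    rw [hper.sub_int_mul_eq, hper.sub_int_mul_eq]; exact he
  have heq := hinj hs1 ht1 he'
  have hk : s - t = ((⌊s / l⌋ : ℝ) - (⌊t / l⌋ : ℝ)) * l := by linarith [heq, sub_mul ((⌊s / l⌋ : ℝ)) ((⌊t / l⌋ : ℝ)) l]
  by_contra hne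
  have hk0 : (⌊s / l⌋ : ℤ) ≠ ⌊t / l⌋ := by
    intro h
    apply hne
    rw [h, sub_self, zero_mul] at hk
    linarith
  have h1 : (1:ℝ) ≤ |(⌊s / l⌋ : ℝ) - (⌊t / l⌋ : ℝ)| := by
    have h2 : (1:ℤ) ≤ |⌊s / l⌋ - ⌊t / l⌋| := Int.one_le_abs (sub_ne_zero.2 hk0)
    calc (1:ℝ) ≤ |((⌊s / l⌋ - ⌊t / l⌋ : ℤ) : ℝ)| := by exact_mod_cast h2
      _ = |(⌊s / l⌋ : ℝ) - (⌊t / l⌋ : ℝ)| := by push_cast; ring_nf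
  have h3 : l ≤ |s - t| := by
    rw [hk, abs_mul, abs_of_pos hl]
    nlinarith
  linarith

private lemma lip_of_deriv_bound'' {f : ℝ → ℂ} (hf : Differentiable ℝ f) {C : ℝ}
    (hC : ∀ x, ‖deriv f x‖ ≤ C) (s t : ℝ) : ‖f s - f t‖ ≤ C * |s - t| := by
  have := Convex.norm_image_sub_le_of_norm_deriv_le (s := (univ : Set ℝ))
    (fun x _ => (hf x)) (fun x _ => hC x) convex_univ (mem_univ t) (mem_univ s)
  simpa [Real.norm_eq_abs] using this

private lemma small_chord'' {γ : ℝ → ℂ} (hd1 : Differentiable ℝ γ)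
    (hd2 : Differentiable ℝ (deriv γ))
    (hunit : ∀ t, ‖deriv γ t‖ = 1) {K : ℝ} (hK : ∀ x, ‖deriv (deriv γ) x‖ ≤ K)
    {a b : ℝ} (hab : K * |b - a| ≤ 1 / 2) : |b - a| / 2 ≤ ‖γ b - γ a‖ := by
  set g := deriv γ with hg
  have glip : ∀ u v : ℝ, ‖g u - g v‖ ≤ K * |u - v| := fun u v =>
    lip_of_deriv_bound'' hd2 hK u v
  set F : ℝ → ℂ := fun u => γ u - u • g a with hF
  have hF' : ∀ u : ℝ, HasDerivAt F (g u - g a) u := fun u => by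
    have h1 : HasDerivAt (fun u : ℝ => u • g a) (g a) u := by
      simpa using (hasDerivAt_id u).smul_const (g a)
    exact ((hd1 u).hasDerivAt).sub h1
  have key : ∀ x ∈ uIcc a b, ‖g x - g a‖ ≤ K * |b - a| := fun x hx => by
    have h1 : |x - a| ≤ |b - a| := by
      rcases Set.mem_uIcc.mp hx with ⟨h1, h2⟩ | ⟨h1, h2⟩
      · rw [abs_of_nonneg (by linarith), abs_of_nonneg (by linarith)]; linarith
      · rw [abs_of_nonpos (by linarith), abs_of_nonpos (by linarith)]; linarith
    calc ‖g x - g a‖ ≤ K * |x - a| := glip x a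
      _ ≤ K * |b - a| := mul_le_mul_of_nonneg_left h1 ((norm_nonneg _).trans (hK 0))
  have hK0 : 0 ≤ K := (norm_nonneg _).trans (hK 0)
  have hmv := Convex.norm_image_sub_le_of_norm_hasDerivWithin_le
    (fun x _ => (hF' x).hasDerivWithinAt) key (convex_uIcc a b) left_mem_uIcc right_mem_uIcc
  have hmv' : ‖F b - F a‖ ≤ K * |b - a| * |b - a| := by
    simpa [Real.norm_eq_abs] using hmv
  have hFba : F b - F a = (γ b - γ a) - (b - a) • g a := by
    simp only [hF, sub_smul]; abel
  have hnorm : ‖(b - a) • g a‖ = |b - a| := by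
    rw [norm_smul, Real.norm_eq_abs, hunit, mul_one]
  have htri : ‖(b - a) • g a‖ - ‖γ b - γ a‖ ≤ ‖F b - F a‖ := by
    have h3 := norm_sub_norm_le ((b - a) • g a) (γ b - γ a)
    have h2 : (b - a) • g a - (γ b - γ a) = -(F b - F a) := by
      rw [hFba]; abel
    rw [h2, norm_neg] at h3; exact h3
  rw [hnorm] at htri
  nlinarith [mul_le_mul_of_nonneg_right hab (abs_nonneg (b - a)),
    norm_nonneg (γ b - γ a)]

private lemma chord_lb'' {l : ℝ} (hl : 0 < l) {γ : ℝ → ℂ}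
    (hγ : ContDiff ℝ 3 γ) (hper : Function.Periodic γ l)
    (hinj : Set.InjOn γ (Set.Ico 0 l)) (hunit : ∀ t, ‖deriv γ t‖ = 1) :
    ∃ c > 0, ∀ s t : ℝ, t ∈ Icc 0 l → |s - t| ≤ l / 2 →
      c * |s - t| ≤ ‖γ s - γ t‖ := by
  have e32 : (3 : WithTop ℕ∞) = 2 + 1 := by norm_num
  have hg2 : ContDiff ℝ 2 (deriv γ) := (contDiff_succ_iff_deriv.mp (e32 ▸ hγ)).2.2
  have e21 : (2 : WithTop ℕ∞) = 1 + 1 := by norm_num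
  have hh1 : ContDiff ℝ 1 (deriv (deriv γ)) := (contDiff_succ_iff_deriv.mp (e21 ▸ hg2)).2.2
  have hd1 : Differentiable ℝ γ := hγ.differentiable (by norm_num)
  have hd2 : Differentiable ℝ (deriv γ) := hg2.differentiable (by norm_num)
  have hperh : Function.Periodic (deriv (deriv γ)) l :=
    periodic_deriv'' (periodic_deriv'' hper)
  obtain ⟨C, hC⟩ := periodic_bound'' hl hperh hh1.continuous
  set K := max C 1 with hKdef
  have hK : ∀ x, ‖deriv (deriv γ) x‖ ≤ K := fun x => (hC x).trans (le_max_left _ _)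
  have hK1 : (1:ℝ) ≤ K := le_max_right _ _
  have hK0 : (0:ℝ) < K := by linarith
  set δ := min (1 / (2 * K)) (l / 2) with hδdef
  have hδ0 : 0 < δ := lt_min (by positivity) (by linarith)
  have hδl : δ ≤ l / 2 := min_le_right _ _
  set S : Set (ℝ × ℝ) := (Icc (-l) (2 * l) ×ˢ Icc (0:ℝ) l) ∩
    {p : ℝ × ℝ | δ ≤ |p.1 - p.2| ∧ |p.1 - p.2| ≤ l / 2} with hSdef
  have hScl : IsClosed {p : ℝ × ℝ | δ ≤ |p.1 - p.2| ∧ |p.1 - p.2| ≤ l / 2} :=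
    (isClosed_le continuous_const (continuous_fst.sub continuous_snd).abs).inter
      (isClosed_le (continuous_fst.sub continuous_snd).abs continuous_const)
  have hScomp : IsCompact S := (isCompact_Icc.prod isCompact_Icc).inter_right hScl
  have hSne : S.Nonempty := by
    refine ⟨(δ, 0), ⟨⟨⟨by linarith, by linarith⟩, ⟨le_rfl, hl.le⟩⟩, ?_, ?_⟩⟩
    · show δ ≤ |δ - 0|
      rw [sub_zero, abs_of_pos hδ0]
    · show |δ - 0| ≤ l / 2
      rw [sub_zero, abs_of_pos hδ0]; exact hδl
  have hcont : ContinuousOn (fun p : ℝ × ℝ => ‖γ p.1 - γ p.2‖) S :=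
    (((hγ.continuous.comp continuous_fst).sub (hγ.continuous.comp continuous_snd)).norm).continuousOn
  obtain ⟨p₀, hp₀S, hp₀⟩ := hScomp.exists_isMinOn hSne hcont
  set m := ‖γ p₀.1 - γ p₀.2‖ with hmdef
  have hm : 0 < m := by
    rw [hmdef, norm_pos_iff, sub_ne_zero]
    intro he
    have heq := inj_half'' hl hper hinj hp₀S.2.2 he
    have h21 : δ ≤ |p₀.1 - p₀.2| := hp₀S.2.1
    rw [heq, sub_self, abs_zero] at h21
    linarith
  refine ⟨min (1/2) (m / l), lt_min (by norm_num) (by positivity), fun s t ht hst => ?_⟩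
  have hc2 : min (1/2) (m / l) ≤ 1/2 := min_le_left _ _
  have hc3 : min (1/2) (m / l) ≤ m / l := min_le_right _ _
  have hc0 : 0 < min (1/2) (m / l) := lt_min (by norm_num) (by positivity)
  rcases le_or_gt |s - t| δ with hsmall | hbig
  · have h1 : K * |s - t| ≤ 1 / 2 := by
      have : K * |s - t| ≤ K * (1 / (2 * K)) :=
        mul_le_mul_of_nonneg_left (hsmall.trans (min_le_left _ _)) hK0.le
      calc K * |s - t| ≤ K * (1 / (2 * K)) := this
        _ = 1 / 2 := by field_simp
    have h2 := small_chord'' hd1 hd2 hunit hK h1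
    calc min (1/2) (m / l) * |s - t| ≤ (1/2) * |s - t| :=
          mul_le_mul_of_nonneg_right hc2 (abs_nonneg _)
      _ ≤ ‖γ s - γ t‖ := by linarith
  · have habs := abs_le.mp hst
    have hpS : (s, t) ∈ S := by
      refine ⟨⟨⟨by linarith [ht.1, ht.2], by linarith [ht.1, ht.2]⟩, ht⟩, hbig.le, hst⟩
    have hmin : m ≤ ‖γ s - γ t‖ := isMinOn_iff.mp hp₀ (s, t) hpS
    calc min (1/2) (m / l) * |s - t| ≤ (m / l) * |s - t| :=
          mul_le_mul_of_nonneg_right hc3 (abs_nonneg _)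
      _ ≤ (m / l) * (l / 2) :=
          mul_le_mul_of_nonneg_left hst (div_nonneg hm.le hl.le)
      _ = m / 2 := by field_simp
      _ ≤ m := by linarith
      _ ≤ ‖γ s - γ t‖ := hmin

/-- Finiteness of the constant `C₂(γ)`: for a `C³` curve,
`Re((γ''(s) − γ''(t))/(γ(s) − γ(t)))` is uniformly bounded over all `s, t`
with `γ(s) ≠ γ(t)`. -/
theorem re_second_derivative_quotient_bounded
    (l : ℝ) (hl : 0 < l)
    (γ : ℝ → ℂ) (hγ : ContDiff ℝ 3 γ) (hper : Function.Periodic γ l)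
    (hinj : Set.InjOn γ (Set.Ico 0 l)) (hunit : ∀ t, ‖deriv γ t‖ = 1) :
    ∃ M > 0, ∀ s t : ℝ, γ s ≠ γ t →
      |((deriv (deriv γ) s - deriv (deriv γ) t) / (γ s - γ t)).re| ≤ M := by
  have e32 : (3 : WithTop ℕ∞) = 2 + 1 := by norm_num
  have hg2 : ContDiff ℝ 2 (deriv γ) := (contDiff_succ_iff_deriv.mp (e32 ▸ hγ)).2.2
  have e21 : (2 : WithTop ℕ∞) = 1 + 1 := by norm_num
  have hh1 : ContDiff ℝ 1 (deriv (deriv γ)) := (contDiff_succ_iff_deriv.mp (e21 ▸ hg2)).2.2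
  have hdh := contDiff_one_iff_deriv.mp hh1
  have hperg : Function.Periodic (deriv γ) l := periodic_deriv'' hper
  have hperh : Function.Periodic (deriv (deriv γ)) l := periodic_deriv'' hperg
  have hperh' : Function.Periodic (deriv (deriv (deriv γ))) l := periodic_deriv'' hperh
  obtain ⟨L, hL⟩ := periodic_bound'' hl hperh' hdh.2
  have hL0 : (0:ℝ) ≤ L := (norm_nonneg _).trans (hL 0)
  have hlip : ∀ u v : ℝ, ‖deriv (deriv γ) u - deriv (deriv γ) v‖ ≤ L * |u - v| :=
    fun u v => lip_of_deriv_bound'' hdh.1 hL u v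
  obtain ⟨c, hc0, hc⟩ := chord_lb'' hl hγ hper hinj hunit
  refine ⟨L / c + 1, by positivity, fun s t hne => ?_⟩
  set k : ℤ := round ((s - t) / l) with hk
  set r : ℝ := s - t - k * l with hrdef
  have hr2 : |r| ≤ l / 2 := by
    have h1 := abs_sub_round ((s - t) / l)
    have h2 : r = ((s - t) / l - k) * l := by field_simp [hrdef]; ring
    rw [h2, abs_mul, abs_of_pos hl]
    nlinarith
  set t' : ℝ := t - ⌊t / l⌋ * l with ht'def
  have ht'mem : t' ∈ Set.Icc (0:ℝ) l :=
    ⟨Int.sub_floor_div_mul_nonneg t hl, (Int.sub_floor_div_mul_lt t hl).le⟩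
  set s' : ℝ := t' + r with hs'def
  have hs'eq : s' = s - (↑(⌊t / l⌋ + k)) * l := by
    push_cast; rw [hs'def, ht'def, hrdef]; ring
  have hγs : γ s' = γ s := by rw [hs'eq]; exact hper.sub_int_mul_eq _
  have hγt : γ t' = γ t := hper.sub_int_mul_eq _
  have hhs : deriv (deriv γ) s' = deriv (deriv γ) s := by
    rw [hs'eq]; exact hperh.sub_int_mul_eq _
  have hht : deriv (deriv γ) t' = deriv (deriv γ) t := hperh.sub_int_mul_eq _
  have hst' : |s' - t'| ≤ l / 2 := by rw [hs'def]; simpa using hr2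
  have hne' : γ s' ≠ γ t' := by rw [hγs, hγt]; exact hne
  have hd0 : s' ≠ t' := fun h => hne' (by rw [h])
  have hdpos : 0 < |s' - t'| := abs_pos.mpr (sub_ne_zero.2 hd0)
  have hnum : ‖deriv (deriv γ) s - deriv (deriv γ) t‖ ≤ L * |s' - t'| := by
    rw [← hhs, ← hht]; exact hlip s' t'
  have hden : c * |s' - t'| ≤ ‖γ s - γ t‖ := by
    rw [← hγs, ← hγt]; exact hc s' t' ht'mem hst'
  have habs : |((deriv (deriv γ) s - deriv (deriv γ) t) / (γ s - γ t)).re| ≤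
      ‖(deriv (deriv γ) s - deriv (deriv γ) t) / (γ s - γ t)‖ :=
    Complex.abs_re_le_norm _
  refine habs.trans ?_
  rw [norm_div]
  have hq : ‖deriv (deriv γ) s - deriv (deriv γ) t‖ / ‖γ s - γ t‖ ≤
      (L * |s' - t'|) / (c * |s' - t'|) :=
    div_le_div₀ (by positivity) hnum (by positivity) hden
  have he : (L * |s' - t'|) / (c * |s' - t'|) = L / c :=
    mul_div_mul_right L c (ne_of_gt hdpos)
  have hLc : (0:ℝ) ≤ L / c := by positivity
  linarith [hq, he.le, he.ge]
end

section
/- There exists a constant M = M(γ) > 0 such that for all s₁ < s₂ < s₃ < s₁ + l: | Re{γ'(s₁)/(γ(s₁)−γ(s₂))}·Re{γ'(s₁)/(γ(s₁)−γ(s₃))} + Re{γ'(s₂)/(γ(s₂)−γ(s₁))}·Re{γ'(s₂)/(γ(s₂)−γ(s₃))} + Re{γ'(s₃)/(γ(s₃)−γ(s₁))}·Re{γ'(s₃)/(γ(s₃)−γ(s₂))} | ≤ M. (This is the finiteness of the three-point constant C₃(γ) used in the Dyson-type potential estimate; note that the individual terms are unbounded near triple collisions, so the bound expresses a cancellation.)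 -/
open Set Complex

noncomputable def Kk (γ : ℝ → ℂ) (s t : ℝ) : ℝ := (deriv γ s / (γ s - γ t)).re
noncomputable def Pφ (γ : ℝ → ℂ) (s t : ℝ) : ℝ := Kk γ s t + (t - s)⁻¹
noncomputable def Ww (γ : ℝ → ℂ) (s t : ℝ) : ℂ := (γ t - γ s) / ((t - s : ℝ) : ℂ)
noncomputable def Ff (γ : ℝ → ℂ) (a b c : ℝ) : ℝ :=
  Kk γ a b * Kk γ a c + Kk γ b a * Kk γ b c + Kk γ c a * Kk γ c b

lemma hasDerivAt_re_comp {f : ℝ → ℂ} {d : ℂ} {x : ℝ} (h : HasDerivAt f d x) :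
    HasDerivAt (fun x => (f x).re) d.re x := by
  exact (Complex.reCLM.hasFDerivAt (x := f x)).comp_hasDerivAt x h

lemma periodic_deriv' (f : ℝ → ℂ) (l : ℝ) (h : Function.Periodic f l) :
    Function.Periodic (deriv f) l := by
  intro x
  have he : (fun y => f (y + l)) = f := funext fun y => h y
  calc deriv f (x + l) = deriv (fun y => f (y + l)) x := (deriv_comp_add_const f l x).symm
  _ = deriv f x := by rw [he]

lemma Ww_symm (γ : ℝ → ℂ) (s t : ℝ) : Ww γ s t = Ww γ t s := by
  unfold Ww
  rcases eq_or_ne s t with rfl | h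
  · rfl
  · have h1 : ((t - s : ℝ) : ℂ) ≠ 0 := by
      simpa [sub_eq_zero] using fun hc => h hc.symm
    have h2 : ((s - t : ℝ) : ℂ) ≠ 0 := by
      simpa [sub_eq_zero] using h
    rw [div_eq_div_iff h1 h2]; push_cast; ring

lemma Ff_cycle (γ : ℝ → ℂ) (a b c : ℝ) : Ff γ a b c = Ff γ c a b := by
  unfold Ff; ring

lemma bound_of_periodic (f : ℝ → ℂ) (l : ℝ) (hl : 0 < l) (hf : Continuous f)
    (hp : Function.Periodic f l) : ∃ C, 0 ≤ C ∧ ∀ s, ‖f s‖ ≤ C := by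
  obtain ⟨x₀, -, hmax⟩ := isCompact_Icc.exists_isMaxOn (s := Icc (0:ℝ) l)
    ⟨0, by constructor <;> [rfl; exact hl.le]⟩ (hf.norm.continuousOn)
  refine ⟨‖f x₀‖, norm_nonneg _, fun s => ?_⟩
  have h1 : f s = f (s - ⌊s / l⌋ * l) := (hp.sub_int_mul_eq ⌊s/l⌋).symm
  have h2 : s - ⌊s / l⌋ * l ∈ Icc (0:ℝ) l :=
    ⟨Int.sub_floor_div_mul_nonneg s hl, (Int.sub_floor_div_mul_lt s hl).le⟩
  rw [h1]; exact hmax h2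

section Taylor
variable {γ : ℝ → ℂ} {C₃ : ℝ}

lemma taylor0 (hd3 : Differentiable ℝ (deriv (deriv γ)))
    (hb3 : ∀ s, ‖deriv (deriv (deriv γ)) s‖ ≤ C₃) (a b : ℝ) :
    ‖deriv (deriv γ) b - deriv (deriv γ) a‖ ≤ C₃ * |b - a| := by
  have := Convex.norm_image_sub_le_of_norm_hasDerivWithin_le
    (f := deriv (deriv γ)) (f' := deriv (deriv (deriv γ))) (s := univ)
    (fun x _ => (hd3 x).hasDerivAt.hasDerivWithinAt)
    (fun x _ => hb3 x) convex_univ (mem_univ a) (mem_univ b)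
  simpa [Real.norm_eq_abs] using this

lemma mem_uIcc_abs {s h x : ℝ} (hx : x ∈ uIcc s (s + h)) : |x - s| ≤ |h| := by
  rcases Set.mem_uIcc.mp hx with ⟨h1, h2⟩ | ⟨h1, h2⟩ <;>
    rw [abs_le] <;> constructor <;>
    nlinarith [le_abs_self h, neg_abs_le h]

lemma taylor1 (hd2 : Differentiable ℝ (deriv γ))
    (hd3 : Differentiable ℝ (deriv (deriv γ)))
    (hb3 : ∀ s, ‖deriv (deriv (deriv γ)) s‖ ≤ C₃) (s h : ℝ) :
    ‖deriv γ (s + h) - deriv γ s - (h:ℂ) * deriv (deriv γ) s‖ ≤ C₃ * h ^ 2 := by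
  set g : ℝ → ℂ := fun x => deriv γ x - (x - s) • deriv (deriv γ) s with hg
  have hder : ∀ x, HasDerivAt g (deriv (deriv γ) x - deriv (deriv γ) s) x := by
    intro x
    have h1 : HasDerivAt (fun y : ℝ => (y - s) • deriv (deriv γ) s)
        ((1:ℝ) • deriv (deriv γ) s) x :=
      ((hasDerivAt_id x).sub_const s).smul_const _
    have h2 := ((hd2 x).hasDerivAt).sub h1
    rw [one_smul] at h2
    exact h2
  have key := Convex.norm_image_sub_le_of_norm_hasDerivWithin_le
    (f := g) (f' := fun x => deriv (deriv γ) x - deriv (deriv γ) s)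
    (s := uIcc s (s + h))
    (fun x _ => (hder x).hasDerivWithinAt)
    (fun x hx => by
      have h1 := taylor0 hd3 hb3 s x
      have h2 := mem_uIcc_abs hx
      have hC : 0 ≤ C₃ := le_trans (norm_nonneg _) (hb3 0)
      calc ‖deriv (deriv γ) x - deriv (deriv γ) s‖ ≤ C₃ * |x - s| := h1
      _ ≤ C₃ * |h| := by nlinarith)
    (convex_uIcc _ _) left_mem_uIcc right_mem_uIcc
  have e1 : g (s + h) - g s = deriv γ (s + h) - deriv γ s - (h:ℂ) * deriv (deriv γ) s := by
    simp only [hg]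
    push_cast [Complex.real_smul]
    ring_nf
  rw [e1] at key
  calc ‖_‖ ≤ C₃ * |h| * ‖s + h - s‖ := key
  _ = C₃ * h ^ 2 := by
    rw [show s + h - s = h by ring, Real.norm_eq_abs, mul_assoc, abs_mul_abs_self, sq]

lemma taylor2 (hd1 : Differentiable ℝ γ) (hd2 : Differentiable ℝ (deriv γ))
    (hd3 : Differentiable ℝ (deriv (deriv γ)))
    (hb3 : ∀ s, ‖deriv (deriv (deriv γ)) s‖ ≤ C₃) (s h : ℝ) :
    ‖γ (s + h) - γ s - (h:ℂ) * deriv γ s - ((h:ℂ) ^ 2 / 2) * deriv (deriv γ) s‖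
      ≤ C₃ * |h| ^ 3 := by
  set g : ℝ → ℂ := fun x =>
    γ x - (x - s) • deriv γ s - ((x - s) ^ 2 / 2) • deriv (deriv γ) s with hg
  have hder : ∀ x, HasDerivAt g
      (deriv γ x - deriv γ s - (x - s) • deriv (deriv γ) s) x := by
    intro x
    have h1 : HasDerivAt (fun y : ℝ => (y - s) • deriv γ s) ((1:ℝ) • deriv γ s) x :=
      ((hasDerivAt_id x).sub_const s).smul_const _
    have h2 : HasDerivAt (fun y : ℝ => ((y - s) ^ 2 / 2)) (x - s) x := by
      have := (((hasDerivAt_id x).sub_const s).pow 2).div_const 2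
      refine this.congr_deriv ?_
      simp only [id]
      push_cast
      ring
    have h3 := h2.smul_const (deriv (deriv γ) s)
    have h4 := (((hd1 x).hasDerivAt).sub h1).sub h3
    rw [one_smul] at h4
    exact h4
  have key := Convex.norm_image_sub_le_of_norm_hasDerivWithin_le
    (f := g) (f' := fun x => deriv γ x - deriv γ s - (x - s) • deriv (deriv γ) s)
    (s := uIcc s (s + h))
    (fun x _ => (hder x).hasDerivWithinAt)
    (fun x hx => by
      have t1 := taylor1 hd2 hd3 hb3 s (x - s)
      rw [show s + (x - s) = x by ring] at t1
      have habs := mem_uIcc_abs hx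
      have hC : 0 ≤ C₃ := le_trans (norm_nonneg _) (hb3 0)
      calc ‖deriv γ x - deriv γ s - (x - s) • deriv (deriv γ) s‖
          = ‖deriv γ x - deriv γ s - ((x - s : ℝ):ℂ) * deriv (deriv γ) s‖ := by
            rw [Complex.real_smul]
      _ ≤ C₃ * (x - s) ^ 2 := t1
      _ ≤ C₃ * h ^ 2 := by
        have h2 : (x - s) ^ 2 ≤ h ^ 2 := by
          have := pow_le_pow_left₀ (abs_nonneg (x - s)) habs 2
          simpa [_root_.sq_abs] using this
        nlinarith)
    (convex_uIcc _ _) left_mem_uIcc right_mem_uIcc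
  have e1 : g (s + h) - g s
      = γ (s + h) - γ s - (h:ℂ) * deriv γ s - ((h:ℂ) ^ 2 / 2) * deriv (deriv γ) s := by
    simp only [hg]
    push_cast [Complex.real_smul]
    ring_nf
  rw [e1] at key
  calc ‖_‖ ≤ C₃ * h ^ 2 * ‖s + h - s‖ := key
  _ = C₃ * |h| ^ 3 := by
    rw [show s + h - s = h by ring, Real.norm_eq_abs, ← _root_.sq_abs h]
    ring

end Taylor

section Near
variable {γ : ℝ → ℂ} {C₂ C₃ δ : ℝ}

lemma ofReal_sub_ne {s t : ℝ} (h : t ≠ s) : ((t - s : ℝ) : ℂ) ≠ 0 := by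
  simpa [sub_eq_zero] using h

lemma w_taylor (hd1 : Differentiable ℝ γ) (hd2 : Differentiable ℝ (deriv γ))
    (hd3 : Differentiable ℝ (deriv (deriv γ)))
    (hb3 : ∀ s, ‖deriv (deriv (deriv γ)) s‖ ≤ C₃) {s t : ℝ} (h : t ≠ s) :
    ‖Ww γ s t - deriv γ s - (((t - s) / 2 : ℝ) : ℂ) * deriv (deriv γ) s‖
      ≤ C₃ * (t - s) ^ 2 := by
  have h0 : ((t - s : ℝ) : ℂ) ≠ 0 := ofReal_sub_ne h
  have t2 := taylor2 hd1 hd2 hd3 hb3 s (t - s)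
  rw [show s + (t - s) = t by ring] at t2
  have e : Ww γ s t - deriv γ s - (((t - s) / 2 : ℝ) : ℂ) * deriv (deriv γ) s
      = (((t - s : ℝ) : ℂ))⁻¹ * (γ t - γ s - ((t - s : ℝ) : ℂ) * deriv γ s
        - (((t - s : ℝ) : ℂ) ^ 2 / 2) * deriv (deriv γ) s) := by
    have h0' : ((t : ℂ) - (s : ℂ)) ≠ 0 := by push_cast at h0; exact h0
    unfold Ww
    push_cast
    field_simp
  rw [e, norm_mul, norm_inv, Complex.norm_real, Real.norm_eq_abs]
  have habs : (0:ℝ) < |t - s| := abs_pos.mpr (sub_ne_zero.mpr h)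
  calc |t - s|⁻¹ * ‖_‖ ≤ |t - s|⁻¹ * (C₃ * |t - s| ^ 3) := by
        exact mul_le_mul_of_nonneg_left t2 (by positivity)
  _ = C₃ * (t - s) ^ 2 := by
    rw [show |t - s| ^ 3 = |t - s| * (t - s) ^ 2 by
      rw [← _root_.sq_abs (t - s)]; ring]
    field_simp

lemma w_close (hd1 : Differentiable ℝ γ) (hd2 : Differentiable ℝ (deriv γ))
    (hd3 : Differentiable ℝ (deriv (deriv γ)))
    (hb2 : ∀ s, ‖deriv (deriv γ) s‖ ≤ C₂)
    (hb3 : ∀ s, ‖deriv (deriv (deriv γ)) s‖ ≤ C₃) {s t : ℝ} (h : t ≠ s) :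
    ‖Ww γ s t - deriv γ s‖ ≤ C₂ * |t - s| / 2 + C₃ * (t - s) ^ 2 := by
  have h1 := w_taylor hd1 hd2 hd3 hb3 h
  have h2 : ‖(((t - s) / 2 : ℝ) : ℂ) * deriv (deriv γ) s‖ ≤ |t - s| / 2 * C₂ := by
    rw [norm_mul, Complex.norm_real, Real.norm_eq_abs, abs_div,
      show |(2:ℝ)| = 2 by norm_num]
    exact mul_le_mul_of_nonneg_left (hb2 s) (by positivity)
  have e : Ww γ s t - deriv γ s
      = (Ww γ s t - deriv γ s - (((t - s) / 2 : ℝ) : ℂ) * deriv (deriv γ) s)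
        + (((t - s) / 2 : ℝ) : ℂ) * deriv (deriv γ) s := by ring
  rw [e]
  refine le_trans (norm_add_le _ _) ?_
  have := add_le_add h1 h2
  linarith

lemma w_lower (hd1 : Differentiable ℝ γ) (hd2 : Differentiable ℝ (deriv γ))
    (hd3 : Differentiable ℝ (deriv (deriv γ)))
    (hb2 : ∀ s, ‖deriv (deriv γ) s‖ ≤ C₂)
    (hb3 : ∀ s, ‖deriv (deriv (deriv γ)) s‖ ≤ C₃)
    (hunit : ∀ t, ‖deriv γ t‖ = 1)
    (hδ1 : δ ≤ 1) (hδs : δ * (C₂ + 4 * C₃) ≤ 1 / 2)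
    {s t : ℝ} (h : t ≠ s) (hsmall : |t - s| ≤ 2 * δ) :
    1 / 2 ≤ ‖Ww γ s t‖ := by
  have h1 := w_close hd1 hd2 hd3 hb2 hb3 h
  have h2 := abs_norm_sub_norm_le (Ww γ s t) (deriv γ s)
  rw [hunit s] at h2
  have h3 : |t - s| ≥ 0 := abs_nonneg _
  have hC2 : 0 ≤ C₂ := le_trans (norm_nonneg _) (hb2 0)
  have hC3 : 0 ≤ C₃ := le_trans (norm_nonneg _) (hb3 0)
  have h4 : (t - s) ^ 2 ≤ 4 * δ ^ 2 := by
    have := _root_.sq_abs (t - s)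
    nlinarith
  have hδ0 : 0 ≤ δ := by nlinarith
  have h5 := abs_le.mp h2
  nlinarith [mul_le_mul_of_nonneg_left hsmall hC2, mul_le_mul_of_nonneg_left h4 hC3,
    mul_le_mul_of_nonneg_left hδ1 (mul_nonneg hC3 hδ0)]

lemma z_eq (γ : ℝ → ℂ) {s t : ℝ} (h : t ≠ s) :
    γ s - γ t = -(((t - s : ℝ) : ℂ) * Ww γ s t) := by
  have h0 : ((t - s : ℝ) : ℂ) ≠ 0 := ofReal_sub_ne h
  have h0' : ((t : ℂ) - (s : ℂ)) ≠ 0 := by push_cast at h0; exact h0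
  unfold Ww
  push_cast
  field_simp
  ring

lemma z_lower (hd1 : Differentiable ℝ γ) (hd2 : Differentiable ℝ (deriv γ))
    (hd3 : Differentiable ℝ (deriv (deriv γ)))
    (hb2 : ∀ s, ‖deriv (deriv γ) s‖ ≤ C₂)
    (hb3 : ∀ s, ‖deriv (deriv (deriv γ)) s‖ ≤ C₃)
    (hunit : ∀ t, ‖deriv γ t‖ = 1)
    (hδ1 : δ ≤ 1) (hδs : δ * (C₂ + 4 * C₃) ≤ 1 / 2)
    {s t : ℝ} (h : t ≠ s) (hsmall : |t - s| ≤ 2 * δ) :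
    |t - s| / 2 ≤ ‖γ s - γ t‖ := by
  have hw := w_lower hd1 hd2 hd3 hb2 hb3 hunit hδ1 hδs h hsmall
  rw [z_eq γ h, norm_neg, norm_mul, Complex.norm_real, Real.norm_eq_abs]
  have h3 : |t - s| ≥ 0 := abs_nonneg _
  nlinarith

lemma z_ne (hd1 : Differentiable ℝ γ) (hd2 : Differentiable ℝ (deriv γ))
    (hd3 : Differentiable ℝ (deriv (deriv γ)))
    (hb2 : ∀ s, ‖deriv (deriv γ) s‖ ≤ C₂)
    (hb3 : ∀ s, ‖deriv (deriv (deriv γ)) s‖ ≤ C₃)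
    (hunit : ∀ t, ‖deriv γ t‖ = 1)
    (hδ1 : δ ≤ 1) (hδs : δ * (C₂ + 4 * C₃) ≤ 1 / 2)
    {s t : ℝ} (h : t ≠ s) (hsmall : |t - s| ≤ 2 * δ) :
    γ s - γ t ≠ 0 := by
  have := z_lower hd1 hd2 hd3 hb2 hb3 hunit hδ1 hδs h hsmall
  have habs : (0:ℝ) < |t - s| := abs_pos.mpr (sub_ne_zero.mpr h)
  intro hc
  rw [hc, norm_zero] at this
  linarith

lemma re_div_le (a z : ℂ) (c : ℝ) (hc : 0 < c) (hz : c ≤ ‖z‖) :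
    |(a / z).re| ≤ ‖a‖ / c := by
  calc |(a / z).re| ≤ ‖a / z‖ := Complex.abs_re_le_norm _
  _ = ‖a‖ / ‖z‖ := norm_div _ _
  _ ≤ ‖a‖ / c := by
    apply div_le_div_of_nonneg_left (norm_nonneg _) hc hz

lemma K_near (hd1 : Differentiable ℝ γ) (hd2 : Differentiable ℝ (deriv γ))
    (hd3 : Differentiable ℝ (deriv (deriv γ)))
    (hb2 : ∀ s, ‖deriv (deriv γ) s‖ ≤ C₂)
    (hb3 : ∀ s, ‖deriv (deriv (deriv γ)) s‖ ≤ C₃)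
    (hunit : ∀ t, ‖deriv γ t‖ = 1)
    (hδ1 : δ ≤ 1) (hδs : δ * (C₂ + 4 * C₃) ≤ 1 / 2)
    {s t : ℝ} (h : t ≠ s) (hsmall : |t - s| ≤ 2 * δ) :
    |Kk γ s t| ≤ 2 / |t - s| := by
  have hz := z_lower hd1 hd2 hd3 hb2 hb3 hunit hδ1 hδs h hsmall
  have habs : (0:ℝ) < |t - s| := abs_pos.mpr (sub_ne_zero.mpr h)
  have := re_div_le (deriv γ s) (γ s - γ t) (|t - s| / 2) (by linarith) hz
  unfold Kk
  rw [hunit s] at this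
  calc |(deriv γ s / (γ s - γ t)).re| ≤ 1 / (|t - s| / 2) := this
  _ = 2 / |t - s| := by field_simp

lemma phi_eq (hd1 : Differentiable ℝ γ) (hd2 : Differentiable ℝ (deriv γ))
    (hd3 : Differentiable ℝ (deriv (deriv γ)))
    (hb2 : ∀ s, ‖deriv (deriv γ) s‖ ≤ C₂)
    (hb3 : ∀ s, ‖deriv (deriv (deriv γ)) s‖ ≤ C₃)
    (hunit : ∀ t, ‖deriv γ t‖ = 1)
    (hδ1 : δ ≤ 1) (hδs : δ * (C₂ + 4 * C₃) ≤ 1 / 2)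
    {s t : ℝ} (h : t ≠ s) (hsmall : |t - s| ≤ 2 * δ) :
    Pφ γ s t = ((Ww γ s t - deriv γ s) / (((t - s : ℝ) : ℂ) * Ww γ s t)).re := by
  have hw := w_lower hd1 hd2 hd3 hb2 hb3 hunit hδ1 hδs h hsmall
  have hwne : Ww γ s t ≠ 0 := by
    intro hc; rw [hc, norm_zero] at hw; linarith
  have h0 : ((t - s : ℝ) : ℂ) ≠ 0 := ofReal_sub_ne h
  unfold Pφ Kk
  have e1 : ((t - s : ℝ))⁻¹ = ((((t - s : ℝ) : ℂ))⁻¹).re := by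
    rw [← Complex.ofReal_inv, Complex.ofReal_re]
  rw [e1, ← Complex.add_re]
  congr 1
  rw [z_eq γ h]
  have key : ∀ (a w c : ℂ), c ≠ 0 → w ≠ 0 → a / (-(c * w)) + c⁻¹ = (w - a) / (c * w) := by
    intro a w c hc hw
    field_simp
    ring
  exact key _ _ _ h0 hwne

lemma phi_bound (hd1 : Differentiable ℝ γ) (hd2 : Differentiable ℝ (deriv γ))
    (hd3 : Differentiable ℝ (deriv (deriv γ)))
    (hb2 : ∀ s, ‖deriv (deriv γ) s‖ ≤ C₂)
    (hb3 : ∀ s, ‖deriv (deriv (deriv γ)) s‖ ≤ C₃)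
    (hunit : ∀ t, ‖deriv γ t‖ = 1)
    (hδ1 : δ ≤ 1) (hδs : δ * (C₂ + 4 * C₃) ≤ 1 / 2)
    {s t : ℝ} (h : t ≠ s) (hsmall : |t - s| ≤ 2 * δ) :
    |Pφ γ s t| ≤ C₂ + 1 := by
  have hw := w_lower hd1 hd2 hd3 hb2 hb3 hunit hδ1 hδs h hsmall
  have hcl := w_close hd1 hd2 hd3 hb2 hb3 h
  have habs : (0:ℝ) < |t - s| := abs_pos.mpr (sub_ne_zero.mpr h)
  have hC2 : 0 ≤ C₂ := le_trans (norm_nonneg _) (hb2 0)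
  have hC3 : 0 ≤ C₃ := le_trans (norm_nonneg _) (hb3 0)
  have hδ0 : 0 ≤ δ := by nlinarith
  rw [phi_eq hd1 hd2 hd3 hb2 hb3 hunit hδ1 hδs h hsmall]
  have hden : |t - s| / 2 ≤ ‖((t - s : ℝ) : ℂ) * Ww γ s t‖ := by
    rw [norm_mul, Complex.norm_real, Real.norm_eq_abs]
    nlinarith
  have := re_div_le (Ww γ s t - deriv γ s) (((t - s : ℝ) : ℂ) * Ww γ s t)
    (|t - s| / 2) (by linarith) hden
  refine le_trans this ?_
  rw [div_le_iff₀ (by linarith)]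
  have hsq : (t - s) ^ 2 = |t - s| * |t - s| := by
    rw [← _root_.sq_abs]; ring
  nlinarith [mul_le_mul_of_nonneg_right (mul_le_mul_of_nonneg_left hsmall hC3) (abs_nonneg (t-s)),
    mul_le_mul_of_nonneg_right hδs (abs_nonneg (t-s)),
    mul_nonneg (mul_nonneg hδ0 hC2) (abs_nonneg (t-s))]

lemma K_hasDeriv (hd1 : Differentiable ℝ γ) (hd2 : Differentiable ℝ (deriv γ))
    {t x : ℝ} (hz : γ x - γ t ≠ 0) :
    HasDerivAt (fun y => Kk γ y t)
      (((deriv (deriv γ) x * (γ x - γ t) - deriv γ x * deriv γ x) / (γ x - γ t) ^ 2).re) x := by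
  have h1 : HasDerivAt (fun y => deriv γ y / (γ y - γ t))
      ((deriv (deriv γ) x * (γ x - γ t) - deriv γ x * deriv γ x) / (γ x - γ t) ^ 2) x :=
    ((hd2 x).hasDerivAt).div (((hd1 x).hasDerivAt).sub_const (γ t)) hz
  exact hasDerivAt_re_comp h1

lemma Phi_hasDeriv (hd1 : Differentiable ℝ γ) (hd2 : Differentiable ℝ (deriv γ))
    {t x : ℝ} (hz : γ x - γ t ≠ 0) (hx : t ≠ x) :
    HasDerivAt (fun y => Pφ γ y t)
      (((deriv (deriv γ) x * (γ x - γ t) - deriv γ x * deriv γ x) / (γ x - γ t) ^ 2).re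
        + ((t - x) ^ 2)⁻¹) x := by
  have h1 := K_hasDeriv hd1 hd2 hz
  have h3 : HasDerivAt (fun y : ℝ => t - y) (-1) x := (hasDerivAt_id x).const_sub t
  have h4 := h3.inv (sub_ne_zero.mpr hx)
  have h5 : HasDerivAt (fun y : ℝ => (t - y)⁻¹) (((t - x) ^ 2)⁻¹) x := by
    refine h4.congr_deriv ?_
    norm_num
  exact h1.add h5

set_option maxHeartbeats 1000000 in
lemma Phi_deriv_bound (hd1 : Differentiable ℝ γ) (hd2 : Differentiable ℝ (deriv γ))
    (hd3 : Differentiable ℝ (deriv (deriv γ)))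
    (hb2 : ∀ s, ‖deriv (deriv γ) s‖ ≤ C₂)
    (hb3 : ∀ s, ‖deriv (deriv (deriv γ)) s‖ ≤ C₃)
    (hunit : ∀ t, ‖deriv γ t‖ = 1)
    (hδ1 : δ ≤ 1) (hδs : δ * (C₂ + 4 * C₃) ≤ 1 / 2)
    {t x : ℝ} (hx : t ≠ x) (hsmall : |t - x| ≤ 2 * δ) :
    |((deriv (deriv γ) x * (γ x - γ t) - deriv γ x * deriv γ x) / (γ x - γ t) ^ 2).re
        + ((t - x) ^ 2)⁻¹| ≤ 4 * (C₂ ^ 2 + 3 * C₃) := by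
  have hC2 : 0 ≤ C₂ := le_trans (norm_nonneg _) (hb2 0)
  have hC3 : 0 ≤ C₃ := le_trans (norm_nonneg _) (hb3 0)
  have hw := w_lower hd1 hd2 hd3 hb2 hb3 hunit hδ1 hδs hx hsmall
  have hwne : Ww γ x t ≠ 0 := by intro hc; rw [hc, norm_zero] at hw; linarith
  have hδ0 : 0 ≤ δ := by nlinarith [abs_nonneg (t - x)]
  have h0 : ((t - x : ℝ) : ℂ) ≠ 0 := ofReal_sub_ne hx
  have habs : (0:ℝ) < |t - x| := abs_pos.mpr (sub_ne_zero.mpr hx)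
  set c : ℂ := ((t - x : ℝ) : ℂ) with hc
  set W := Ww γ x t with hWW
  set e1 := deriv γ x with he1d
  set e2 := deriv (deriv γ) x with he2d
  set ρ : ℂ := W - e1 - (((t - x) / 2 : ℝ) : ℂ) * e2 with hρdef
  have hρ : ‖ρ‖ ≤ C₃ * (t - x) ^ 2 := w_taylor hd1 hd2 hd3 hb3 hx
  have hWdef : W = e1 + c / 2 * e2 + ρ := by rw [hρdef, hc]; push_cast; ring
  set N : ℂ := e1 ^ 2 + c * e2 * W - W ^ 2 with hNdef
  have hNeq : N = c ^ 2 / 4 * e2 ^ 2 - 2 * e1 * ρ - ρ ^ 2 := by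
    rw [hNdef, hWdef]; ring
  -- complex rewriting of the derivative value
  have key : ∀ (a b cc ww : ℂ), cc ≠ 0 → ww ≠ 0 →
      (b * (-(cc * ww)) - a * a) / (-(cc * ww)) ^ 2 + (cc ^ 2)⁻¹
        = -((a ^ 2 + cc * b * ww - ww ^ 2) / (cc ^ 2 * ww ^ 2)) := by
    intro a b cc ww hcc hww
    field_simp
    ring
  have hzeq : γ x - γ t = -(c * W) := z_eq γ hx
  have hre : ((t - x) ^ 2)⁻¹ = ((c ^ 2)⁻¹).re := by
    rw [hc]
    norm_cast
  have hEeq : ((e2 * (γ x - γ t) - e1 * e1) / (γ x - γ t) ^ 2).re + ((t - x) ^ 2)⁻¹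
      = (-(N / (c ^ 2 * W ^ 2))).re := by
    rw [hre, ← Complex.add_re, hzeq, key e1 e2 c W h0 hwne, hNdef]
  rw [hEeq]
  -- bound ‖N‖
  have hsq : (t - x) ^ 2 = |t - x| * |t - x| := by rw [← _root_.sq_abs]; ring
  have hN : ‖N‖ ≤ (C₂ ^ 2 + 3 * C₃) * (t - x) ^ 2 := by
    rw [hNeq]
    have b1 : ‖c ^ 2 / 4 * e2 ^ 2‖ ≤ (t - x) ^ 2 / 4 * C₂ ^ 2 := by
      rw [norm_mul, norm_div, norm_pow, norm_pow, hc, Complex.norm_real, Real.norm_eq_abs]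
      rw [show ‖(4:ℂ)‖ = 4 by norm_num]
      have : |t - x| ^ 2 = (t - x) ^ 2 := _root_.sq_abs _
      rw [this]
      have h2 : ‖e2‖ ^ 2 ≤ C₂ ^ 2 := by
        apply pow_le_pow_left₀ (norm_nonneg _) (hb2 x)
      have : (0:ℝ) ≤ (t - x) ^ 2 / 4 := by positivity
      calc (t - x) ^ 2 / 4 * ‖e2‖ ^ 2 ≤ (t - x) ^ 2 / 4 * C₂ ^ 2 :=
        mul_le_mul_of_nonneg_left h2 this
      _ = (t - x) ^ 2 / 4 * C₂ ^ 2 := rfl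
    have b2 : ‖2 * e1 * ρ‖ ≤ 2 * (C₃ * (t - x) ^ 2) := by
      rw [norm_mul, norm_mul, hunit x, show ‖(2:ℂ)‖ = 2 by norm_num, mul_one]
      exact mul_le_mul_of_nonneg_left hρ (by norm_num)
    have b3 : ‖ρ ^ 2‖ ≤ C₃ * (t - x) ^ 2 := by
      rw [norm_pow]
      have hρ2 : ‖ρ‖ ≤ 1 := by
        have h4 : (t - x) ^ 2 ≤ 4 * δ ^ 2 := by nlinarith [_root_.sq_abs (t - x)]
        nlinarith
      calc ‖ρ‖ ^ 2 = ‖ρ‖ * ‖ρ‖ := by rw [sq]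
      _ ≤ (C₃ * (t - x) ^ 2) * 1 := by
          apply mul_le_mul hρ hρ2 (norm_nonneg _)
          positivity
      _ = C₃ * (t - x) ^ 2 := by ring
    calc ‖c ^ 2 / 4 * e2 ^ 2 - 2 * e1 * ρ - ρ ^ 2‖
        ≤ ‖c ^ 2 / 4 * e2 ^ 2 - 2 * e1 * ρ‖ + ‖ρ ^ 2‖ := norm_sub_le _ _
    _ ≤ (‖c ^ 2 / 4 * e2 ^ 2‖ + ‖2 * e1 * ρ‖) + ‖ρ ^ 2‖ :=
        add_le_add_left (norm_sub_le _ _) _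
    _ ≤ ((t - x) ^ 2 / 4 * C₂ ^ 2 + 2 * (C₃ * (t - x) ^ 2)) + C₃ * (t - x) ^ 2 := by
        exact add_le_add (add_le_add b1 b2) b3
    _ ≤ (C₂ ^ 2 + 3 * C₃) * (t - x) ^ 2 := by nlinarith [sq_nonneg (t - x)]
  -- final division bound
  have hden : (t - x) ^ 2 / 4 ≤ ‖c ^ 2 * W ^ 2‖ := by
    rw [norm_mul, norm_pow, norm_pow, hc, Complex.norm_real, Real.norm_eq_abs, _root_.sq_abs]
    have hW2 : (1:ℝ)/4 ≤ ‖W‖ ^ 2 := by nlinarith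
    nlinarith [mul_le_mul_of_nonneg_left hW2 (sq_nonneg (t - x))]
  have hpos : (0:ℝ) < (t - x) ^ 2 / 4 := by
    have h2 : (0:ℝ) < (t - x) ^ 2 := by rw [hsq]; exact mul_pos habs habs
    linarith
  have hfin := re_div_le N (c ^ 2 * W ^ 2) ((t - x) ^ 2 / 4) hpos hden
  rw [Complex.neg_re, abs_neg]
  refine le_trans hfin ?_
  rw [div_le_iff₀ hpos]
  nlinarith [sq_nonneg (t - x)]

lemma Phi_lip (hd1 : Differentiable ℝ γ) (hd2 : Differentiable ℝ (deriv γ))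
    (hd3 : Differentiable ℝ (deriv (deriv γ)))
    (hb2 : ∀ s, ‖deriv (deriv γ) s‖ ≤ C₂)
    (hb3 : ∀ s, ‖deriv (deriv (deriv γ)) s‖ ≤ C₃)
    (hunit : ∀ t, ‖deriv γ t‖ = 1)
    (hδ1 : δ ≤ 1) (hδs : δ * (C₂ + 4 * C₃) ≤ 1 / 2)
    {t a b : ℝ} (hab : a ≤ b)
    (hcond : ∀ x ∈ Icc a b, t ≠ x ∧ |t - x| ≤ 2 * δ) :
    |Pφ γ b t - Pφ γ a t| ≤ 4 * (C₂ ^ 2 + 3 * C₃) * (b - a) := by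
  have key := Convex.norm_image_sub_le_of_norm_hasDerivWithin_le
    (f := fun y => Pφ γ y t)
    (f' := fun x => ((deriv (deriv γ) x * (γ x - γ t) - deriv γ x * deriv γ x)
      / (γ x - γ t) ^ 2).re + ((t - x) ^ 2)⁻¹)
    (s := Icc a b)
    (fun x hx => by
      obtain ⟨hx1, hx2⟩ := hcond x hx
      exact (Phi_hasDeriv hd1 hd2
        (z_ne hd1 hd2 hd3 hb2 hb3 hunit hδ1 hδs hx1 hx2) hx1).hasDerivWithinAt)
    (fun x hx => by
      obtain ⟨hx1, hx2⟩ := hcond x hx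
      exact Phi_deriv_bound hd1 hd2 hd3 hb2 hb3 hunit hδ1 hδs hx1 hx2)
    (convex_Icc a b) (left_mem_Icc.mpr hab) (right_mem_Icc.mpr hab)
  rw [Real.norm_eq_abs, Real.norm_eq_abs] at key
  calc |Pφ γ b t - Pφ γ a t| ≤ 4 * (C₂ ^ 2 + 3 * C₃) * |b - a| := key
  _ = 4 * (C₂ ^ 2 + 3 * C₃) * (b - a) := by rw [_root_.abs_of_nonneg (by linarith : (0:ℝ) ≤ b - a)]

lemma K_far_bound {m : ℝ} (hm : 0 < m) (hunit : ∀ t, ‖deriv γ t‖ = 1)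
    {s t : ℝ} (hfar : m ≤ ‖γ s - γ t‖) : |Kk γ s t| ≤ 1 / m := by
  have := re_div_le (deriv γ s) (γ s - γ t) m hm hfar
  unfold Kk
  rw [hunit s] at this
  exact this

lemma K_far_lip (hd1 : Differentiable ℝ γ) (hd2 : Differentiable ℝ (deriv γ))
    (hb2 : ∀ s, ‖deriv (deriv γ) s‖ ≤ C₂)
    (hunit : ∀ t, ‖deriv γ t‖ = 1)
    {m : ℝ} (hm : 0 < m) {t a b : ℝ} (hab : a ≤ b)
    (hfar : ∀ x ∈ Icc a b, m ≤ ‖γ x - γ t‖) :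
    |Kk γ b t - Kk γ a t| ≤ (C₂ / m + 1 / m ^ 2) * (b - a) := by
  have key := Convex.norm_image_sub_le_of_norm_hasDerivWithin_le
    (f := fun y => Kk γ y t)
    (f' := fun x => ((deriv (deriv γ) x * (γ x - γ t) - deriv γ x * deriv γ x)
      / (γ x - γ t) ^ 2).re)
    (s := Icc a b)
    (fun x hx => by
      have hz : γ x - γ t ≠ 0 := by
        intro hc
        have := hfar x hx
        rw [hc, norm_zero] at this
        linarith
      exact (K_hasDeriv hd1 hd2 hz).hasDerivWithinAt)
    (fun x hx => by
      have hfx := hfar x hx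
      have hz : γ x - γ t ≠ 0 := by
        intro hc; rw [hc, norm_zero] at hfx; linarith
      have e : (deriv (deriv γ) x * (γ x - γ t) - deriv γ x * deriv γ x)
          / (γ x - γ t) ^ 2
          = deriv (deriv γ) x / (γ x - γ t)
            - deriv γ x ^ 2 / (γ x - γ t) ^ 2 := by
        field_simp
      show |((deriv (deriv γ) x * (γ x - γ t) - deriv γ x * deriv γ x)
        / (γ x - γ t) ^ 2).re| ≤ C₂ / m + 1 / m ^ 2
      rw [e, Complex.sub_re]
      have b1 : |(deriv (deriv γ) x / (γ x - γ t)).re| ≤ C₂ / m := by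
        refine le_trans (re_div_le _ _ m hm hfx) ?_
        gcongr
        exact hb2 x
      have b2 : |(deriv γ x ^ 2 / (γ x - γ t) ^ 2).re| ≤ 1 / m ^ 2 := by
        have hf2 : m ^ 2 ≤ ‖(γ x - γ t) ^ 2‖ := by
          rw [norm_pow]
          exact pow_le_pow_left₀ hm.le hfx 2
        refine le_trans (re_div_le _ _ (m ^ 2) (by positivity) hf2) ?_
        rw [norm_pow, hunit x]
        norm_num
      calc |(deriv (deriv γ) x / (γ x - γ t)).re - (deriv γ x ^ 2 / (γ x - γ t) ^ 2).re|
          ≤ |(deriv (deriv γ) x / (γ x - γ t)).re| + |(deriv γ x ^ 2 / (γ x - γ t) ^ 2).re| :=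
            abs_sub _ _
      _ ≤ C₂ / m + 1 / m ^ 2 := add_le_add b1 b2)
    (convex_Icc a b) (left_mem_Icc.mpr hab) (right_mem_Icc.mpr hab)
  rw [Real.norm_eq_abs, Real.norm_eq_abs] at key
  calc |Kk γ b t - Kk γ a t| ≤ (C₂ / m + 1 / m ^ 2) * |b - a| := key
  _ = (C₂ / m + 1 / m ^ 2) * (b - a) := by rw [_root_.abs_of_nonneg (by linarith : (0:ℝ) ≤ b - a)]

set_option maxHeartbeats 1000000 in
lemma phi_mu (hd1 : Differentiable ℝ γ) (hd2 : Differentiable ℝ (deriv γ))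
    (hd3 : Differentiable ℝ (deriv (deriv γ)))
    (hb2 : ∀ s, ‖deriv (deriv γ) s‖ ≤ C₂)
    (hb3 : ∀ s, ‖deriv (deriv (deriv γ)) s‖ ≤ C₃)
    (hunit : ∀ t, ‖deriv γ t‖ = 1)
    (hδ1 : δ ≤ 1) (hδs : δ * (C₂ + 4 * C₃) ≤ 1 / 2)
    {s t : ℝ} (h : s ≠ t) (hsmall : |s - t| ≤ 2 * δ) :
    |Pφ γ s t - (deriv (deriv γ) t / (2 * deriv γ t)).re|
      ≤ (C₂ ^ 2 + 5 * C₃) * |s - t| := by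
  have hC2 : 0 ≤ C₂ := le_trans (norm_nonneg _) (hb2 0)
  have hC3 : 0 ≤ C₃ := le_trans (norm_nonneg _) (hb3 0)
  have habs : (0:ℝ) < |s - t| := abs_pos.mpr (sub_ne_zero.mpr h)
  have hδ0 : 0 ≤ δ := by nlinarith
  have hts : |t - s| ≤ 2 * δ := by rw [abs_sub_comm]; exact hsmall
  have hw' := w_lower hd1 hd2 hd3 hb2 hb3 hunit hδ1 hδs h.symm hts
  -- note : Ww γ s t with h : t ≠ s argument order; w_lower needs (t ≠ s)
  set c : ℂ := ((s - t : ℝ) : ℂ) with hcdef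
  have h0 : c ≠ 0 := ofReal_sub_ne h
  set W := Ww γ t s with hWW
  have hWsymm : Ww γ s t = W := Ww_symm γ s t
  have hw : 1 / 2 ≤ ‖W‖ := by
    rw [← hWsymm]
    exact hw'
  have hwne : W ≠ 0 := by intro hc; rw [hc, norm_zero] at hw; linarith
  set e1 := deriv γ t with he1d
  set e2 := deriv (deriv γ) t with he2d
  have hene : e1 ≠ 0 := by
    intro hc
    have := hunit t
    rw [← he1d, hc, norm_zero] at this
    norm_num at this
  set ρ : ℂ := W - e1 - (((s - t) / 2 : ℝ) : ℂ) * e2 with hρdef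
  have hρ : ‖ρ‖ ≤ C₃ * (s - t) ^ 2 := w_taylor hd1 hd2 hd3 hb3 h
  have hWdef : W = e1 + c / 2 * e2 + ρ := by rw [hρdef, hcdef]; push_cast; ring
  set r : ℂ := deriv γ s - e1 - c * e2 with hrdef
  have hr : ‖r‖ ≤ C₃ * (s - t) ^ 2 := by
    have := taylor1 hd2 hd3 hb3 t (s - t)
    rw [show t + (s - t) = s by ring] at this
    rw [hrdef, hcdef]
    exact this
  have hds : deriv γ s = e1 + c * e2 + r := by rw [hrdef]; ring
  have hzeq : γ s - γ t = c * W := by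
    have h2 := z_eq γ (show s ≠ t from h)
    rw [hcdef, hWW]
    linear_combination -h2
  -- algebraic identity
  have key : ∀ (a E1 E2 cc ww : ℂ), cc ≠ 0 → ww ≠ 0 → E1 ≠ 0 →
      a / (cc * ww) + (-cc)⁻¹ - E2 / (2 * E1)
        = (2 * E1 * (a - ww) - cc * E2 * ww) / (2 * E1 * cc * ww) := by
    intro a E1 E2 cc ww hcc hww hE1
    rw [inv_neg]
    field_simp
    ring
  set M : ℂ := 2 * e1 * (deriv γ s - W) - c * e2 * W with hMdef
  have hMeq : M = 2 * e1 * (r - ρ) - c ^ 2 / 2 * e2 ^ 2 - c * e2 * ρ := by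
    rw [hMdef, hds, hWdef]; ring
  -- express the difference as a real part
  have hre1 : ((t - s : ℝ))⁻¹ = ((-c)⁻¹).re := by
    rw [hcdef]
    norm_cast
    rw [show -(s - t) = t - s by ring]
  have hdiff : Pφ γ s t - (e2 / (2 * e1)).re
      = ((deriv γ s / (γ s - γ t)) + (-c)⁻¹ - e2 / (2 * e1)).re := by
    unfold Pφ Kk
    rw [Complex.sub_re, Complex.add_re, ← hre1, he1d, he2d]
  rw [hdiff, hzeq, key (deriv γ s) e1 e2 c W h0 hwne hene, ← hMdef]
  -- bound M
  have hsq : (s - t) ^ 2 = |s - t| * |s - t| := by rw [← _root_.sq_abs]; ring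
  have hnc : ‖c‖ = |s - t| := by rw [hcdef, Complex.norm_real, Real.norm_eq_abs]
  have hM : ‖M‖ ≤ (C₂ ^ 2 + 5 * C₃) * (s - t) ^ 2 := by
    rw [hMeq]
    have b1 : ‖2 * e1 * (r - ρ)‖ ≤ 2 * (2 * (C₃ * (s - t) ^ 2)) := by
      rw [norm_mul, norm_mul, hunit t, show ‖(2:ℂ)‖ = 2 by norm_num, mul_one]
      have := norm_sub_le r ρ
      have h2 : ‖r - ρ‖ ≤ 2 * (C₃ * (s - t) ^ 2) := by linarith
      linarith [mul_le_mul_of_nonneg_left h2 (show (0:ℝ) ≤ 2 by norm_num)]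
    have b2 : ‖c ^ 2 / 2 * e2 ^ 2‖ ≤ (s - t) ^ 2 / 2 * C₂ ^ 2 := by
      rw [norm_mul, norm_div, norm_pow, norm_pow, hnc, show ‖(2:ℂ)‖ = 2 by norm_num,
        _root_.sq_abs]
      have h2 : ‖e2‖ ^ 2 ≤ C₂ ^ 2 := pow_le_pow_left₀ (norm_nonneg _) (hb2 t) 2
      exact mul_le_mul_of_nonneg_left h2 (by positivity)
    have b3 : ‖c * e2 * ρ‖ ≤ C₃ * (s - t) ^ 2 := by
      rw [norm_mul, norm_mul, hnc]
      have h2 : ‖e2‖ ≤ C₂ := hb2 t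
      have h3 : |s - t| * C₂ ≤ 1 := by nlinarith
      calc |s - t| * ‖e2‖ * ‖ρ‖ ≤ |s - t| * C₂ * (C₃ * (s - t) ^ 2) := by
            apply mul_le_mul
            · exact mul_le_mul_of_nonneg_left h2 (abs_nonneg _)
            · exact hρ
            · exact norm_nonneg _
            · positivity
      _ ≤ 1 * (C₃ * (s - t) ^ 2) := by
            apply mul_le_mul_of_nonneg_right h3 (by positivity)
      _ = C₃ * (s - t) ^ 2 := by ring
    calc ‖2 * e1 * (r - ρ) - c ^ 2 / 2 * e2 ^ 2 - c * e2 * ρ‖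
        ≤ ‖2 * e1 * (r - ρ) - c ^ 2 / 2 * e2 ^ 2‖ + ‖c * e2 * ρ‖ := norm_sub_le _ _
    _ ≤ (‖2 * e1 * (r - ρ)‖ + ‖c ^ 2 / 2 * e2 ^ 2‖) + ‖c * e2 * ρ‖ :=
        add_le_add_left (norm_sub_le _ _) _
    _ ≤ (2 * (2 * (C₃ * (s - t) ^ 2)) + (s - t) ^ 2 / 2 * C₂ ^ 2) + C₃ * (s - t) ^ 2 :=
        add_le_add (add_le_add b1 b2) b3
    _ ≤ (C₂ ^ 2 + 5 * C₃) * (s - t) ^ 2 := by nlinarith [sq_nonneg (s - t)]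
  -- final bound
  have hden : |s - t| ≤ ‖2 * e1 * c * W‖ := by
    rw [norm_mul, norm_mul, norm_mul, hunit t, hnc, show ‖(2:ℂ)‖ = 2 by norm_num]
    nlinarith
  have hfin := re_div_le M (2 * e1 * c * W) (|s - t|) habs hden
  refine le_trans hfin ?_
  rw [div_le_iff₀ habs]
  calc ‖M‖ ≤ (C₂ ^ 2 + 5 * C₃) * (s - t) ^ 2 := hM
  _ = (C₂ ^ 2 + 5 * C₃) * |s - t| * |s - t| := by rw [hsq]; ring

end Near

section Global
variable {γ : ℝ → ℂ} {l : ℝ}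

lemma gamma_ne (hl : 0 < l) (hper : Function.Periodic γ l)
    (hinj : Set.InjOn γ (Set.Ico 0 l)) {s t : ℝ}
    (h1 : 0 < t - s) (h2 : t - s < l) : γ s ≠ γ t := by
  set k : ℤ := ⌊s / l⌋ with hk
  have hs0 : s - k * l ∈ Ico (0:ℝ) l :=
    ⟨Int.sub_floor_div_mul_nonneg s hl, Int.sub_floor_div_mul_lt s hl⟩
  have hγs : γ s = γ (s - k * l) := (hper.sub_int_mul_eq k).symm
  have hγt : γ t = γ (t - k * l) := (hper.sub_int_mul_eq k).symm
  set s₀ := s - k * l with hs₀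
  set t₀ := t - k * l with ht₀
  have hts : t₀ = s₀ + (t - s) := by rw [hs₀, ht₀]; ring
  intro hc
  rcases lt_or_ge t₀ l with hcase | hcase
  · have ht0 : t₀ ∈ Ico (0:ℝ) l := ⟨by rw [hts]; linarith [hs0.1], hcase⟩
    have : s₀ = t₀ := hinj hs0 ht0 (by rw [← hγs, ← hγt]; exact hc)
    rw [hts] at this; linarith
  · have hγt2 : γ t₀ = γ (t₀ - l) := by
      have := hper (t₀ - l)
      rw [sub_add_cancel] at this
      exact this
    have ht1 : t₀ - l ∈ Ico (0:ℝ) l := ⟨by linarith, by linarith [hs0.2]⟩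
    have : s₀ = t₀ - l := hinj hs0 ht1 (by rw [← hγs, ← hγt2, ← hγt]; exact hc)
    rw [hts] at this; linarith [hs0.1]

lemma chord_lower (hγc : Continuous γ) (hl : 0 < l) (hper : Function.Periodic γ l)
    (hinj : Set.InjOn γ (Set.Ico 0 l)) {δ : ℝ} (hδ0 : 0 < δ) (hδl : 3 * δ ≤ l) :
    ∃ m, 0 < m ∧ ∀ s t : ℝ, δ ≤ t - s → t - s ≤ l - δ → m ≤ ‖γ s - γ t‖ := by
  set g : ℝ × ℝ → ℝ := fun p => ‖γ p.1 - γ (p.1 + p.2)‖ with hg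
  have hgc : Continuous g := ((hγc.comp continuous_fst).sub
    (hγc.comp (continuous_fst.add continuous_snd))).norm
  have hKne : (Icc (0:ℝ) l ×ˢ Icc δ (l - δ)).Nonempty :=
    ⟨(0, δ), ⟨⟨le_refl 0, hl.le⟩, ⟨le_refl δ, by linarith⟩⟩⟩
  obtain ⟨p₀, hp₀, hmin⟩ := (isCompact_Icc.prod isCompact_Icc).exists_isMinOn hKne
    hgc.continuousOn
  refine ⟨g p₀, ?_, ?_⟩
  · rcases hp₀ with ⟨hp1, hp2⟩
    have hne : γ p₀.1 ≠ γ (p₀.1 + p₀.2) :=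
      gamma_ne hl hper hinj (by simp; linarith [hp2.1]) (by simp; linarith [hp2.2])
    have : γ p₀.1 - γ (p₀.1 + p₀.2) ≠ 0 := sub_ne_zero.mpr hne
    simpa [hg] using norm_pos_iff.mpr this
  · intro s t h1 h2
    set k : ℤ := ⌊s / l⌋ with hk
    have hs0 : s - k * l ∈ Icc (0:ℝ) l := by
      constructor
      · exact Int.sub_floor_div_mul_nonneg s hl
      · exact (Int.sub_floor_div_mul_lt s hl).le
    have hmem : ((s - k * l, t - s) : ℝ × ℝ) ∈ Icc (0:ℝ) l ×ˢ Icc δ (l - δ) :=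
      ⟨hs0, h1, h2⟩
    have := hmin hmem
    have he : g (s - k * l, t - s) = ‖γ s - γ t‖ := by
      rw [hg]
      simp only
      rw [show s - k * l + (t - s) = t - k * l by ring,
        hper.sub_int_mul_eq k, hper.sub_int_mul_eq k]
    rw [← he]
    exact this

lemma Kk_per_left (hper : Function.Periodic γ l) (hdper : Function.Periodic (deriv γ) l)
    (a b : ℝ) : Kk γ (a + l) b = Kk γ a b := by
  unfold Kk; rw [hper a, hdper a]

lemma Kk_per_right (hper : Function.Periodic γ l) (a b : ℝ) :
    Kk γ a (b + l) = Kk γ a b := by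
  unfold Kk; rw [hper b]

lemma Ff_per_third (hper : Function.Periodic γ l) (hdper : Function.Periodic (deriv γ) l)
    (a b c : ℝ) : Ff γ a b (c + l) = Ff γ a b c := by
  unfold Ff
  rw [Kk_per_right hper a c, Kk_per_right hper b c, Kk_per_left hper hdper c a,
    Kk_per_left hper hdper c b]

lemma Ff_identity (γ : ℝ → ℂ) {s1 s2 s3 : ℝ} (h12 : s1 < s2) (h23 : s2 < s3) :
    Ff γ s1 s2 s3 = Pφ γ s1 s2 * Pφ γ s1 s3 + Pφ γ s2 s1 * Pφ γ s2 s3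
      + Pφ γ s3 s1 * Pφ γ s3 s2
      + (Pφ γ s2 s3 - Pφ γ s1 s3) / (s2 - s1)
      + (Pφ γ s3 s2 - Pφ γ s1 s2) / (s3 - s1)
      + (Pφ γ s3 s1 - Pφ γ s2 s1) / (s3 - s2) := by
  have e : ∀ a b : ℝ, Kk γ a b = Pφ γ a b - (b - a)⁻¹ := by
    intro a b; unfold Pφ; ring
  unfold Ff
  rw [e s1 s2, e s1 s3, e s2 s1, e s2 s3, e s3 s1, e s3 s2]
  have h1 : s2 - s1 ≠ 0 := by intro hc; linarith [sub_eq_zero.mp hc]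
  have h2 : s3 - s1 ≠ 0 := by intro hc; linarith [sub_eq_zero.mp hc]
  have h3 : s3 - s2 ≠ 0 := by intro hc; linarith [sub_eq_zero.mp hc]
  have h1' : s1 - s2 ≠ 0 := by intro hc; linarith [sub_eq_zero.mp hc]
  have h2' : s1 - s3 ≠ 0 := by intro hc; linarith [sub_eq_zero.mp hc]
  have h3' : s2 - s3 ≠ 0 := by intro hc; linarith [sub_eq_zero.mp hc]
  field_simp
  ring

end Global

lemma abs6 (x1 x2 x3 x4 x5 x6 : ℝ) :
    |x1 + x2 + x3 + x4 + x5 + x6| ≤ |x1| + |x2| + |x3| + |x4| + |x5| + |x6| := by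
  calc |x1 + x2 + x3 + x4 + x5 + x6| ≤ |x1 + x2 + x3 + x4 + x5| + |x6| := abs_add_le _ _
  _ ≤ (|x1 + x2 + x3 + x4| + |x5|) + |x6| := by linarith [abs_add_le (x1+x2+x3+x4) x5]
  _ ≤ ((|x1 + x2 + x3| + |x4|) + |x5|) + |x6| := by linarith [abs_add_le (x1+x2+x3) x4]
  _ ≤ (((|x1 + x2| + |x3|) + |x4|) + |x5|) + |x6| := by linarith [abs_add_le (x1+x2) x3]
  _ ≤ |x1| + |x2| + |x3| + |x4| + |x5| + |x6| := by linarith [abs_add_le x1 x2]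

lemma abs3 (x1 x2 x3 : ℝ) : |x1 + x2 + x3| ≤ |x1| + |x2| + |x3| := by
  calc |x1 + x2 + x3| ≤ |x1 + x2| + |x3| := abs_add_le _ _
  _ ≤ |x1| + |x2| + |x3| := by linarith [abs_add_le x1 x2]

set_option maxHeartbeats 2000000 in
/-- Finiteness of the three-point constant `C₃(γ)` used in the Dyson-type
potential estimate: the cyclically symmetrized product of kernels is uniformly
bounded over ordered triples `s₁ < s₂ < s₃ < s₁ + l`. -/
theorem three_point_kernel_bounded
    (l : ℝ) (hl : 0 < l)
    (γ : ℝ → ℂ) (hγ : ContDiff ℝ 3 γ) (hper : Function.Periodic γ l)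
    (hinj : Set.InjOn γ (Set.Ico 0 l)) (hunit : ∀ t, ‖deriv γ t‖ = 1) :
    ∃ M > 0, ∀ s₁ s₂ s₃ : ℝ, s₁ < s₂ → s₂ < s₃ → s₃ < s₁ + l →
      |(deriv γ s₁ / (γ s₁ - γ s₂)).re * (deriv γ s₁ / (γ s₁ - γ s₃)).re
        + (deriv γ s₂ / (γ s₂ - γ s₁)).re * (deriv γ s₂ / (γ s₂ - γ s₃)).re
        + (deriv γ s₃ / (γ s₃ - γ s₁)).re * (deriv γ s₃ / (γ s₃ - γ s₂)).re| ≤ M := by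
  -- differentiability package
  have hd1 : Differentiable ℝ γ := hγ.differentiable (by norm_num)
  have hc2 : ContDiff ℝ 2 (deriv γ) :=
    ((contDiff_succ_iff_deriv (n := 2)).mp (by exact_mod_cast hγ)).2.2
  have hd2 : Differentiable ℝ (deriv γ) := hc2.differentiable (by norm_num)
  have hc1 : ContDiff ℝ 1 (deriv (deriv γ)) :=
    ((contDiff_succ_iff_deriv (n := 1)).mp (by exact_mod_cast hc2)).2.2
  have hd3 : Differentiable ℝ (deriv (deriv γ)) := hc1.differentiable (by norm_num)
  have hct3 : Continuous (deriv (deriv (deriv γ))) := by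
    have := ((contDiff_succ_iff_deriv (n := 0)).mp (by exact_mod_cast hc1)).2.2
    exact this.continuous
  -- periodicity of derivatives
  have hp1 : Function.Periodic (deriv γ) l := periodic_deriv' γ l hper
  have hp2 : Function.Periodic (deriv (deriv γ)) l := periodic_deriv' _ l hp1
  have hp3 : Function.Periodic (deriv (deriv (deriv γ))) l := periodic_deriv' _ l hp2
  -- global bounds on derivatives
  obtain ⟨C₂, hC2, hb2⟩ := bound_of_periodic (deriv (deriv γ)) l hl
    (hc1.continuous) hp2
  obtain ⟨C₃, hC3, hb3⟩ := bound_of_periodic (deriv (deriv (deriv γ))) l hl hct3 hp3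
  -- choice of δ
  set δ : ℝ := min (l / 3) (min 1 (1 / (2 * (C₂ + 4 * C₃) + 2))) with hδdef
  have hδ0 : 0 < δ := lt_min (by linarith) (lt_min one_pos (by positivity))
  have hδ1 : δ ≤ 1 := le_trans (min_le_right _ _) (min_le_left _ _)
  have hδl : 3 * δ ≤ l := by
    have := min_le_left (l / 3) (min 1 (1 / (2 * (C₂ + 4 * C₃) + 2)))
    linarith
  have hδs : δ * (C₂ + 4 * C₃) ≤ 1 / 2 := by
    have h1 : δ ≤ 1 / (2 * (C₂ + 4 * C₃) + 2) :=
      le_trans (min_le_right _ _) (min_le_right _ _)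
    have hB : (0:ℝ) ≤ C₂ + 4 * C₃ := by linarith
    have h2 : δ * (2 * (C₂ + 4 * C₃) + 2) ≤ 1 := by
      rw [← le_div_iff₀ (by positivity)]
      exact h1
    nlinarith
  -- chord lower bound for far pairs
  obtain ⟨m, hm, hmf⟩ := chord_lower hγ.continuous hl hper hinj hδ0 hδl
  -- the global constant
  set M : ℝ := 1 + 3 * (C₂ + 1) ^ 2 + 2 * (4 * (C₂ ^ 2 + 3 * C₃)) + (C₂ ^ 2 + 5 * C₃)
      + 2 * (2 * (C₂ / m + 1 / m ^ 2) + 2 * ((C₂ + 1) / m) + 1 / m ^ 2)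
      + 3 * (1 / m ^ 2) with hMdef
  have t1 : (0:ℝ) ≤ (C₂ + 1) ^ 2 := sq_nonneg _
  have t2 : (0:ℝ) ≤ C₂ ^ 2 + 3 * C₃ := by nlinarith [sq_nonneg C₂]
  have t3 : (0:ℝ) ≤ C₂ ^ 2 + 5 * C₃ := by nlinarith [sq_nonneg C₂]
  have t4 : (0:ℝ) ≤ C₂ / m := div_nonneg hC2 hm.le
  have t5 : (0:ℝ) ≤ 1 / m ^ 2 := by positivity
  have t6 : (0:ℝ) ≤ (C₂ + 1) / m := div_nonneg (by linarith) hm.le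
  have hMpos : 0 < M := by rw [hMdef]; linarith
  refine ⟨M, hMpos, ?_⟩
  -- main bound for triples with c - a ≤ 2l/3
  have key : ∀ a b c : ℝ, a < b → b < c → c - a ≤ 2 * l / 3 → |Ff γ a b c| ≤ M := by
    intro a b c hab hbc hca
    have hba : 0 < b - a := by linarith
    have hcb : 0 < c - b := by linarith
    have hca0 : 0 < c - a := by linarith
    have hlδ : c - a ≤ l - δ := by linarith
    by_cases hu : b - a < δ
    · by_cases hv : c - b < δ
      · -- triple collision regime
        have n1 : b ≠ a := by intro h; rw [h] at hba; linarith
        have n2 : a ≠ b := fun h => n1 h.symm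
        have n3 : c ≠ b := by intro h; rw [h] at hcb; linarith
        have n4 : b ≠ c := fun h => n3 h.symm
        have n5 : c ≠ a := by intro h; rw [h] at hca0; linarith
        have n6 : a ≠ c := fun h => n5 h.symm
        have a1 : |b - a| ≤ 2 * δ := by rw [_root_.abs_of_pos hba]; linarith
        have a2 : |a - b| ≤ 2 * δ := by rw [abs_sub_comm]; exact a1
        have a3 : |c - b| ≤ 2 * δ := by rw [_root_.abs_of_pos hcb]; linarith
        have a4 : |b - c| ≤ 2 * δ := by rw [abs_sub_comm]; exact a3
        have a5 : |c - a| ≤ 2 * δ := by rw [_root_.abs_of_pos hca0]; linarith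
        have a6 : |a - c| ≤ 2 * δ := by rw [abs_sub_comm]; exact a5
        have B12 : |Pφ γ a b| ≤ C₂ + 1 :=
          phi_bound hd1 hd2 hd3 hb2 hb3 hunit hδ1 hδs n1 a1
        have B13 : |Pφ γ a c| ≤ C₂ + 1 :=
          phi_bound hd1 hd2 hd3 hb2 hb3 hunit hδ1 hδs n5 a5
        have B21 : |Pφ γ b a| ≤ C₂ + 1 :=
          phi_bound hd1 hd2 hd3 hb2 hb3 hunit hδ1 hδs n2 a2
        have B23 : |Pφ γ b c| ≤ C₂ + 1 :=
          phi_bound hd1 hd2 hd3 hb2 hb3 hunit hδ1 hδs n3 a3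
        have B31 : |Pφ γ c a| ≤ C₂ + 1 :=
          phi_bound hd1 hd2 hd3 hb2 hb3 hunit hδ1 hδs n6 a6
        have B32 : |Pφ γ c b| ≤ C₂ + 1 :=
          phi_bound hd1 hd2 hd3 hb2 hb3 hunit hδ1 hδs n4 a4
        have lip1 : |Pφ γ b c - Pφ γ a c| ≤ 4 * (C₂ ^ 2 + 3 * C₃) * (b - a) :=
          Phi_lip hd1 hd2 hd3 hb2 hb3 hunit hδ1 hδs hab.le
            (fun x hx => ⟨by intro h; rw [← h] at hx; exact absurd hx.2 (by linarith),
              by rw [_root_.abs_of_pos (by linarith [hx.2] : (0:ℝ) < c - x)]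
                 linarith [hx.1]⟩)
        have lip2 : |Pφ γ c a - Pφ γ b a| ≤ 4 * (C₂ ^ 2 + 3 * C₃) * (c - b) :=
          Phi_lip hd1 hd2 hd3 hb2 hb3 hunit hδ1 hδs hbc.le
            (fun x hx => ⟨by intro h; rw [← h] at hx; exact absurd hx.1 (by linarith),
              by rw [abs_sub_comm, _root_.abs_of_pos (by linarith [hx.1] : (0:ℝ) < x - a)]
                 linarith [hx.2]⟩)
        have mu1 : |Pφ γ a b - (deriv (deriv γ) b / (2 * deriv γ b)).re|
            ≤ (C₂ ^ 2 + 5 * C₃) * |a - b| :=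
          phi_mu hd1 hd2 hd3 hb2 hb3 hunit hδ1 hδs n2 a2
        have mu2 : |Pφ γ c b - (deriv (deriv γ) b / (2 * deriv γ b)).re|
            ≤ (C₂ ^ 2 + 5 * C₃) * |c - b| :=
          phi_mu hd1 hd2 hd3 hb2 hb3 hunit hδ1 hδs n3 a3
        have mudiff : |Pφ γ c b - Pφ γ a b| ≤ (C₂ ^ 2 + 5 * C₃) * (c - a) := by
          have tri := abs_sub_le (Pφ γ c b) ((deriv (deriv γ) b / (2 * deriv γ b)).re)
            (Pφ γ a b)
          rw [_root_.abs_of_pos hcb] at mu2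
          have habm : |a - b| = b - a := by
            rw [abs_sub_comm]; exact _root_.abs_of_pos hba
          rw [habm] at mu1
          have hsw : |(deriv (deriv γ) b / (2 * deriv γ b)).re - Pφ γ a b|
              = |Pφ γ a b - (deriv (deriv γ) b / (2 * deriv γ b)).re| := abs_sub_comm _ _
          have hring : (C₂ ^ 2 + 5 * C₃) * (c - b) + (C₂ ^ 2 + 5 * C₃) * (b - a)
              = (C₂ ^ 2 + 5 * C₃) * (c - a) := by ring
          linarith
        rw [Ff_identity γ hab hbc]
        have q1 : |(Pφ γ b c - Pφ γ a c) / (b - a)| ≤ 4 * (C₂ ^ 2 + 3 * C₃) := by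
          rw [abs_div, _root_.abs_of_pos hba, div_le_iff₀ hba]
          linarith
        have q2 : |(Pφ γ c b - Pφ γ a b) / (c - a)| ≤ C₂ ^ 2 + 5 * C₃ := by
          rw [abs_div, _root_.abs_of_pos hca0, div_le_iff₀ hca0]
          linarith
        have q3 : |(Pφ γ c a - Pφ γ b a) / (c - b)| ≤ 4 * (C₂ ^ 2 + 3 * C₃) := by
          rw [abs_div, _root_.abs_of_pos hcb, div_le_iff₀ hcb]
          linarith
        have p1 : |Pφ γ a b * Pφ γ a c| ≤ (C₂ + 1) ^ 2 := by
          rw [abs_mul, sq]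
          exact mul_le_mul B12 B13 (abs_nonneg _) (by linarith)
        have p2 : |Pφ γ b a * Pφ γ b c| ≤ (C₂ + 1) ^ 2 := by
          rw [abs_mul, sq]
          exact mul_le_mul B21 B23 (abs_nonneg _) (by linarith)
        have p3 : |Pφ γ c a * Pφ γ c b| ≤ (C₂ + 1) ^ 2 := by
          rw [abs_mul, sq]
          exact mul_le_mul B31 B32 (abs_nonneg _) (by linarith)
        refine le_trans (abs6 _ _ _ _ _ _) ?_
        rw [hMdef]
        linarith
      · -- b-a small, c-b large
        push_neg at hv
        have n1 : b ≠ a := by intro h; rw [h] at hba; linarith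
        have n2 : a ≠ b := fun h => n1 h.symm
        have a1 : |b - a| ≤ 2 * δ := by rw [_root_.abs_of_pos hba]; linarith
        have a2 : |a - b| ≤ 2 * δ := by rw [abs_sub_comm]; exact a1
        have e : Ff γ a b c = Kk γ a b * (Kk γ a c - Kk γ b c)
            + (Kk γ a b + Kk γ b a) * Kk γ b c + Kk γ c a * Kk γ c b := by
          unfold Ff; ring
        rw [e]
        have b1 : |Kk γ a b| ≤ 2 / |b - a| :=
          K_near hd1 hd2 hd3 hb2 hb3 hunit hδ1 hδs n1 a1
        rw [_root_.abs_of_pos hba] at b1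
        have b2 : |Kk γ a c - Kk γ b c| ≤ (C₂ / m + 1 / m ^ 2) * (b - a) := by
          rw [abs_sub_comm]
          exact K_far_lip hd1 hd2 hb2 hunit hm hab.le
            (fun x hx => hmf x c (by linarith [hx.2]) (by linarith [hx.1]))
        have pr1 : |Kk γ a b * (Kk γ a c - Kk γ b c)| ≤ 2 * (C₂ / m + 1 / m ^ 2) := by
          rw [abs_mul]
          calc |Kk γ a b| * |Kk γ a c - Kk γ b c|
              ≤ (2 / (b - a)) * ((C₂ / m + 1 / m ^ 2) * (b - a)) := by
                apply mul_le_mul b1 b2 (abs_nonneg _) (by positivity)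
          _ = 2 * (C₂ / m + 1 / m ^ 2) := by field_simp
        have hsum : Kk γ a b + Kk γ b a = Pφ γ a b + Pφ γ b a := by
          have hinv : (a - b)⁻¹ = -((b - a)⁻¹) := by
            rw [show a - b = -(b - a) by ring, inv_neg]
          unfold Pφ
          rw [hinv]; ring
        have b3 : |Kk γ a b + Kk γ b a| ≤ 2 * (C₂ + 1) := by
          rw [hsum]
          have B12 : |Pφ γ a b| ≤ C₂ + 1 :=
            phi_bound hd1 hd2 hd3 hb2 hb3 hunit hδ1 hδs n1 a1
          have B21 : |Pφ γ b a| ≤ C₂ + 1 :=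
            phi_bound hd1 hd2 hd3 hb2 hb3 hunit hδ1 hδs n2 a2
          calc |Pφ γ a b + Pφ γ b a| ≤ |Pφ γ a b| + |Pφ γ b a| := abs_add_le _ _
          _ ≤ 2 * (C₂ + 1) := by linarith
        have b4 : |Kk γ b c| ≤ 1 / m :=
          K_far_bound hm hunit (hmf b c (by linarith) (by linarith))
        have pr2 : |(Kk γ a b + Kk γ b a) * Kk γ b c| ≤ 2 * (C₂ + 1) * (1 / m) := by
          rw [abs_mul]
          exact mul_le_mul b3 b4 (abs_nonneg _) (by linarith)
        have b5 : |Kk γ c a| ≤ 1 / m := by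
          apply K_far_bound hm hunit
          rw [norm_sub_rev]
          exact hmf a c (by linarith) (by linarith)
        have b6 : |Kk γ c b| ≤ 1 / m := by
          apply K_far_bound hm hunit
          rw [norm_sub_rev]
          exact hmf b c (by linarith) (by linarith)
        have pr3 : |Kk γ c a * Kk γ c b| ≤ 1 / m ^ 2 := by
          rw [abs_mul]
          calc |Kk γ c a| * |Kk γ c b| ≤ (1/m) * (1/m) :=
            mul_le_mul b5 b6 (abs_nonneg _) (by positivity)
          _ = 1 / m ^ 2 := by field_simp
        refine le_trans (abs3 _ _ _) ?_
        rw [hMdef]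
        have heq : 2 * (C₂ + 1) * (1/m) = 2 * ((C₂ + 1) / m) := by ring
        rw [heq] at pr2
        linarith
    · push_neg at hu
      by_cases hv : c - b < δ
      · -- c-b small, b-a large
        have n3 : c ≠ b := by intro h; rw [h] at hcb; linarith
        have n4 : b ≠ c := fun h => n3 h.symm
        have a3 : |c - b| ≤ 2 * δ := by rw [_root_.abs_of_pos hcb]; linarith
        have a4 : |b - c| ≤ 2 * δ := by rw [abs_sub_comm]; exact a3
        have e : Ff γ a b c = Kk γ a b * Kk γ a c
            + (Kk γ b a - Kk γ c a) * Kk γ b c + Kk γ c a * (Kk γ b c + Kk γ c b) := by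
          unfold Ff; ring
        rw [e]
        have b1 : |Kk γ a b| ≤ 1 / m :=
          K_far_bound hm hunit (hmf a b (by linarith) (by linarith))
        have b2 : |Kk γ a c| ≤ 1 / m :=
          K_far_bound hm hunit (hmf a c (by linarith) (by linarith))
        have pr1 : |Kk γ a b * Kk γ a c| ≤ 1 / m ^ 2 := by
          rw [abs_mul]
          calc |Kk γ a b| * |Kk γ a c| ≤ (1/m) * (1/m) :=
            mul_le_mul b1 b2 (abs_nonneg _) (by positivity)
          _ = 1 / m ^ 2 := by field_simp
        have b3 : |Kk γ c a - Kk γ b a| ≤ (C₂ / m + 1 / m ^ 2) * (c - b) :=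
          K_far_lip hd1 hd2 hb2 hunit hm hbc.le
            (fun x hx => by
              rw [norm_sub_rev]
              exact hmf a x (by linarith [hx.1]) (by linarith [hx.2]))
        have b4 : |Kk γ b c| ≤ 2 / |c - b| :=
          K_near hd1 hd2 hd3 hb2 hb3 hunit hδ1 hδs n3 a3
        rw [_root_.abs_of_pos hcb] at b4
        have pr2 : |(Kk γ b a - Kk γ c a) * Kk γ b c| ≤ (C₂ / m + 1 / m ^ 2) * 2 := by
          rw [abs_mul]
          have h3' : |Kk γ b a - Kk γ c a| ≤ (C₂ / m + 1 / m ^ 2) * (c - b) := by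
            rw [abs_sub_comm]; exact b3
          calc |Kk γ b a - Kk γ c a| * |Kk γ b c|
              ≤ ((C₂ / m + 1 / m ^ 2) * (c - b)) * (2 / (c - b)) := by
                apply mul_le_mul h3' b4 (abs_nonneg _) (by positivity)
          _ = (C₂ / m + 1 / m ^ 2) * 2 := by field_simp
        have b5 : |Kk γ c a| ≤ 1 / m := by
          apply K_far_bound hm hunit
          rw [norm_sub_rev]
          exact hmf a c (by linarith) (by linarith)
        have hsum : Kk γ b c + Kk γ c b = Pφ γ b c + Pφ γ c b := by
          have hinv : (b - c)⁻¹ = -((c - b)⁻¹) := by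
            rw [show b - c = -(c - b) by ring, inv_neg]
          unfold Pφ
          rw [hinv]; ring
        have b6 : |Kk γ b c + Kk γ c b| ≤ 2 * (C₂ + 1) := by
          rw [hsum]
          have B23 : |Pφ γ b c| ≤ C₂ + 1 :=
            phi_bound hd1 hd2 hd3 hb2 hb3 hunit hδ1 hδs n3 a3
          have B32 : |Pφ γ c b| ≤ C₂ + 1 :=
            phi_bound hd1 hd2 hd3 hb2 hb3 hunit hδ1 hδs n4 a4
          calc |Pφ γ b c + Pφ γ c b| ≤ |Pφ γ b c| + |Pφ γ c b| := abs_add_le _ _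
          _ ≤ 2 * (C₂ + 1) := by linarith
        have pr3 : |Kk γ c a * (Kk γ b c + Kk γ c b)| ≤ (1/m) * (2 * (C₂ + 1)) := by
          rw [abs_mul]
          apply mul_le_mul b5 b6 (abs_nonneg _) (by positivity)
        refine le_trans (abs3 _ _ _) ?_
        rw [hMdef]
        have heq : (1/m) * (2 * (C₂ + 1)) = 2 * ((C₂ + 1) / m) := by ring
        rw [heq] at pr3
        have heq2 : (C₂ / m + 1 / m ^ 2) * 2 = 2 * (C₂ / m + 1 / m ^ 2) := by ring
        rw [heq2] at pr2
        linarith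
      · -- both gaps large
        push_neg at hv
        have bb : ∀ x y : ℝ, δ ≤ y - x → y - x ≤ l - δ →
            |Kk γ x y| ≤ 1 / m ∧ |Kk γ y x| ≤ 1 / m := by
          intro x y h1 h2
          constructor
          · exact K_far_bound hm hunit (hmf x y h1 h2)
          · apply K_far_bound hm hunit
            rw [norm_sub_rev]
            exact hmf x y h1 h2
        obtain ⟨c12, c21⟩ := bb a b hu (by linarith)
        obtain ⟨c23, c32⟩ := bb b c hv (by linarith)
        obtain ⟨c13, c31⟩ := bb a c (by linarith) (by linarith)
        have pr : ∀ p q : ℝ, |p| ≤ 1/m → |q| ≤ 1/m → |p * q| ≤ 1 / m ^ 2 := by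
          intro p q h1 h2
          rw [abs_mul]
          calc |p| * |q| ≤ (1/m) * (1/m) :=
              mul_le_mul h1 h2 (abs_nonneg _) (by positivity)
          _ = 1 / m ^ 2 := by field_simp
        have e : Ff γ a b c = Kk γ a b * Kk γ a c + Kk γ b a * Kk γ b c
            + Kk γ c a * Kk γ c b := rfl
        rw [e]
        refine le_trans (abs3 _ _ _) ?_
        have h1 := pr _ _ c12 c13
        have h2 := pr _ _ c21 c23
        have h3 := pr _ _ c31 c32
        rw [hMdef]
        nlinarith [t4, t6]
  -- reduce general triples to the case c - a ≤ 2l/3 by cyclic rotation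
  intro s₁ s₂ s₃ h12 h23 h31
  have hFf : (deriv γ s₁ / (γ s₁ - γ s₂)).re * (deriv γ s₁ / (γ s₁ - γ s₃)).re
        + (deriv γ s₂ / (γ s₂ - γ s₁)).re * (deriv γ s₂ / (γ s₂ - γ s₃)).re
        + (deriv γ s₃ / (γ s₃ - γ s₁)).re * (deriv γ s₃ / (γ s₃ - γ s₂)).re
      = Ff γ s₁ s₂ s₃ := rfl
  rw [hFf]
  rcases le_or_gt (s₃ - s₁) (2 * l / 3) with hcase | hcase
  · exact key s₁ s₂ s₃ h12 h23 hcase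
  · rcases le_or_gt (s₂ - s₁) (s₃ - s₂) with hcmp | hcmp
    · -- rotate twice : triple (s₃, s₁ + l, s₂ + l)
      have e : Ff γ s₁ s₂ s₃ = Ff γ s₃ (s₁ + l) (s₂ + l) := by
        rw [show Ff γ s₃ (s₁ + l) (s₂ + l) = Ff γ (s₂ + l) s₃ (s₁ + l) from
            Ff_cycle γ s₃ (s₁ + l) (s₂ + l),
          Ff_per_third hper hp1 (s₂ + l) s₃ s₁,
          show Ff γ (s₂ + l) s₃ s₁ = Ff γ s₁ (s₂ + l) s₃ from Ff_cycle γ (s₂ + l) s₃ s₁,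
          show Ff γ s₁ (s₂ + l) s₃ = Ff γ s₃ s₁ (s₂ + l) from Ff_cycle γ s₁ (s₂ + l) s₃,
          Ff_per_third hper hp1 s₃ s₁ s₂,
          show Ff γ s₃ s₁ s₂ = Ff γ s₂ s₃ s₁ from Ff_cycle γ s₃ s₁ s₂,
          show Ff γ s₂ s₃ s₁ = Ff γ s₁ s₂ s₃ from Ff_cycle γ s₂ s₃ s₁]
      rw [e]
      exact key s₃ (s₁ + l) (s₂ + l) h31 (by linarith) (by linarith)
    · -- rotate once : triple (s₂, s₃, s₁ + l)
      have e : Ff γ s₁ s₂ s₃ = Ff γ s₂ s₃ (s₁ + l) := by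
        rw [Ff_per_third hper hp1 s₂ s₃ s₁,
          show Ff γ s₂ s₃ s₁ = Ff γ s₁ s₂ s₃ from Ff_cycle γ s₂ s₃ s₁]
      rw [e]
      exact key s₂ s₃ (s₁ + l) h23 h31 (by linarith)
end

section
/- There is a constant c > 0 such that for all s, t ∈ ℝ: |γ(s) − γ(t)| ≥ c · min_{k ∈ ℤ} |s − t − kl|, i.e., the chord length between two points of the curve is bounded below by a constant times their arc-length distance in ℝ/lℤ. -/
/-- Chord–arc lower bound: for the arc-length parametrization of a `C¹` Jordan
curve, the chord length `|γ(s) − γ(t)|` is bounded below by a constant times the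
arc-length distance `min_{k ∈ ℤ} |s − t − kl|` in `ℝ/lℤ`. -/
theorem chord_arc_lower_bound
    (l : ℝ) (hl : 0 < l)
    (γ : ℝ → ℂ) (hγ : ContDiff ℝ 1 γ) (hper : Function.Periodic γ l)
    (hinj : Set.InjOn γ (Set.Ico 0 l)) (hunit : ∀ t, ‖deriv γ t‖ = 1) :
    ∃ c > 0, ∀ s t : ℝ,
      c * (⨅ k : ℤ, |s - t - (k : ℝ) * l|) ≤ ‖γ s - γ t‖ := by
  have hγd : Differentiable ℝ γ := hγ.differentiable one_ne_zero
  have hcd : Continuous (deriv γ) := hγ.continuous_deriv le_rfl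
  -- uniform continuity of the derivative on a large compact interval
  have hUC : UniformContinuousOn (deriv γ) (Set.Icc (-l) (2*l)) :=
    isCompact_Icc.uniformContinuousOn_of_continuous hcd.continuousOn
  rw [Metric.uniformContinuousOn_iff] at hUC
  obtain ⟨δ₀, hδ₀, hδ₀'⟩ := hUC (1/2) (by norm_num)
  set δ : ℝ := min (δ₀/2) (l/2) with hδdef
  have hδpos : 0 < δ := lt_min (by linarith) (by linarith)
  have hδl : δ ≤ l/2 := min_le_right _ _
  -- Step A: local lower bound from the derivative
  have stepA : ∀ a b : ℝ, a ∈ Set.Icc (-l) (2*l) → b ∈ Set.Icc (-l) (2*l) →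
      |a - b| ≤ δ → (1/2) * |a - b| ≤ ‖γ a - γ b‖ := by
    intro a b ha hb hab
    set d : ℂ := deriv γ b with hd
    set g : ℝ → ℂ := fun u => γ u - u • d with hg
    set I : Set ℝ := Set.Icc (min a b) (max a b) with hI
    have hIsub : I ⊆ Set.Icc (-l) (2*l) := by
      intro u hu
      exact ⟨le_trans (le_min ha.1 hb.1) hu.1, le_trans hu.2 (max_le ha.2 hb.2)⟩
    have hgd : ∀ u ∈ I, HasDerivWithinAt g (deriv γ u - d) I u := by
      intro u _
      have h1 : HasDerivAt (fun u : ℝ => u • d) ((1:ℝ) • d) u :=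
        (hasDerivAt_id u).smul_const d
      have h2 : HasDerivAt g (deriv γ u - d) u := by
        exact ((hγd u).hasDerivAt.sub h1).congr_deriv (by simp)
      exact h2.hasDerivWithinAt
    have hbound : ∀ u ∈ I, ‖deriv γ u - d‖ ≤ 1/2 := by
      intro u hu
      have h1 : |u - b| ≤ δ := by
        have h2 := abs_le.1 hab
        rcases le_total a b with h | h
        · rw [hI, min_eq_left h, max_eq_right h] at hu
          rw [abs_le]; constructor <;> linarith [hu.1, hu.2]
        · rw [hI, min_eq_right h, max_eq_left h] at hu
          rw [abs_le]; constructor <;> linarith [hu.1, hu.2]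
      have hub : dist u b < δ₀ := by
        rw [Real.dist_eq]
        have : δ ≤ δ₀/2 := min_le_left _ _
        linarith
      have := hδ₀' u (hIsub hu) b hb hub
      rw [dist_eq_norm] at this
      exact this.le
    have key : ‖g a - g b‖ ≤ (1/2) * ‖a - b‖ :=
      (convex_Icc _ _).norm_image_sub_le_of_norm_hasDerivWithin_le hgd hbound
        ⟨min_le_right a b, le_max_right a b⟩ ⟨min_le_left a b, le_max_left a b⟩
    have hgab : g a - g b = (γ a - γ b) - (a - b) • d := by
      simp only [hg]; module
    have hnorm : ‖(a - b) • d‖ = |a - b| := by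
      rw [norm_smul, Real.norm_eq_abs, hunit b, mul_one]
    have h3 : ‖(a - b) • d‖ - ‖γ a - γ b‖ ≤ ‖g a - g b‖ := by
      calc ‖(a - b) • d‖ - ‖γ a - γ b‖ ≤ ‖(a - b) • d - (γ a - γ b)‖ := norm_sub_norm_le _ _
        _ = ‖g a - g b‖ := by rw [hgab, norm_sub_rev]
    rw [Real.norm_eq_abs] at key
    linarith [hnorm ▸ h3]
  -- Step B: positive minimum chord length at fixed circle-distance scale
  set S : Set (ℝ × ℝ) :=
    (Set.Icc (-l) (2*l) ×ˢ Set.Icc 0 l) ∩ {p | δ ≤ |p.1 - p.2| ∧ |p.1 - p.2| ≤ l - δ} with hS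
  have hScpt : IsCompact S := by
    apply (isCompact_Icc.prod isCompact_Icc).inter_right
    have hco : Continuous fun p : ℝ × ℝ => |p.1 - p.2| :=
      (continuous_fst.sub continuous_snd).abs
    have : {p : ℝ × ℝ | δ ≤ |p.1 - p.2| ∧ |p.1 - p.2| ≤ l - δ}
        = (fun p : ℝ × ℝ => |p.1 - p.2|) ⁻¹' Set.Icc δ (l - δ) := rfl
    rw [this]
    exact isClosed_Icc.preimage hco
  have hmodγ : ∀ (k : ℤ) (x : ℝ), γ (x - (k:ℝ) * l) = γ x := fun k x =>
    hper.sub_int_mul_eq k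
  have hred : ∀ x : ℝ, toIcoMod hl 0 x ∈ Set.Ico 0 l ∧ γ (toIcoMod hl 0 x) = γ x := by
    intro x
    refine ⟨toIcoMod_mem_Ico' hl x, ?_⟩
    have h1 : toIcoMod hl 0 x = x - (toIcoDiv hl 0 x : ℝ) * l := by
      rw [toIcoMod, zsmul_eq_mul]
    rw [h1]; exact hmodγ _ x
  have hSpos : ∀ p ∈ S, γ p.1 ≠ γ p.2 := by
    rintro ⟨a, b⟩ ⟨⟨_, _⟩, hd1, hd2⟩ hab
    obtain ⟨ha', haγ⟩ := hred a
    obtain ⟨hb', hbγ⟩ := hred b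
    have heq : toIcoMod hl 0 a = toIcoMod hl 0 b := hinj ha' hb' (by rw [haγ, hbγ]; exact hab)
    have hsub : a - b = ((toIcoDiv hl 0 a - toIcoDiv hl 0 b : ℤ) : ℝ) * l := by
      have h1 : toIcoMod hl 0 a = a - (toIcoDiv hl 0 a : ℝ) * l := by
        rw [toIcoMod, zsmul_eq_mul]
      have h2 : toIcoMod hl 0 b = b - (toIcoDiv hl 0 b : ℝ) * l := by
        rw [toIcoMod, zsmul_eq_mul]
      rw [h1, h2] at heq
      push_cast
      linarith
    set m : ℤ := toIcoDiv hl 0 a - toIcoDiv hl 0 b with hm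
    rcases eq_or_ne m 0 with h0 | h0
    · rw [hsub, h0] at hd1; simp at hd1; linarith
    · have h1 : (1:ℝ) ≤ |(m:ℝ)| := by
        rw [← Int.cast_abs]
        exact_mod_cast Int.one_le_abs h0
      have h2 : |a - b| = |(m:ℝ)| * l := by rw [hsub, abs_mul, abs_of_pos hl]
      dsimp at hd2
      nlinarith
  obtain ⟨m₀, hm₀pos, hm₀⟩ : ∃ m₀ > 0, ∀ p ∈ S, m₀ ≤ ‖γ p.1 - γ p.2‖ := by
    rcases S.eq_empty_or_nonempty with h | h
    · exact ⟨1, one_pos, by simp [h]⟩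
    · have hcont : ContinuousOn (fun p : ℝ × ℝ => ‖γ p.1 - γ p.2‖) S :=
        (((hγ.continuous.comp continuous_fst).sub
          (hγ.continuous.comp continuous_snd)).norm).continuousOn
      obtain ⟨p, hpS, hp⟩ := hScpt.exists_isMinOn h hcont
      refine ⟨‖γ p.1 - γ p.2‖, norm_pos_iff.2 (sub_ne_zero.2 (hSpos p hpS)), fun q hq => hp hq⟩
  -- combine
  refine ⟨min (1/2) (m₀/l), lt_min (by norm_num) (div_pos hm₀pos hl), fun s t => ?_⟩
  set c : ℝ := min (1/2) (m₀/l) with hc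
  set nd : ℝ := ⨅ k : ℤ, |s - t - (k:ℝ)*l| with hnd
  have hndnn : 0 ≤ nd := le_ciInf fun k => abs_nonneg _
  have hbdd : BddBelow (Set.range fun k : ℤ => |s - t - (k:ℝ)*l|) :=
    ⟨0, by rintro x ⟨k, rfl⟩; exact abs_nonneg _⟩
  set k₀ : ℤ := round ((s - t)/l) with hk0
  have hndle : nd ≤ |s - t - (k₀:ℝ)*l| := ciInf_le hbdd k₀
  set x' : ℝ := s - t - (k₀:ℝ)*l with hx'def
  have hx' : |x'| ≤ l/2 := by
    have h1 : |(s-t)/l - (k₀:ℝ)| ≤ 1/2 := abs_sub_round _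
    have h2 : x' = l * ((s-t)/l - (k₀:ℝ)) := by
      rw [hx'def]; field_simp
    rw [h2, abs_mul, abs_of_pos hl]
    nlinarith
  set t' : ℝ := toIcoMod hl 0 t with ht'def
  obtain ⟨ht', htγ⟩ := hred t
  set s' : ℝ := t' + x' with hs'def
  have hs'γ : γ s' = γ s := by
    have h1 : s' = s - ((k₀ + toIcoDiv hl 0 t : ℤ) : ℝ) * l := by
      have h2 : t' = t - (toIcoDiv hl 0 t : ℝ) * l := by
        rw [ht'def, toIcoMod, zsmul_eq_mul]
      rw [hs'def, h2, hx'def]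
      push_cast
      ring
    rw [h1]; exact hmodγ _ s
  have habs := abs_le.1 hx'
  have hmem_s : s' ∈ Set.Icc (-l) (2*l) := by
    constructor <;> [skip; skip] <;>
      simp only [hs'def] <;> rcases ht' with ⟨h1, h2⟩ <;> linarith [habs.1, habs.2]
  have hmem_t : t' ∈ Set.Icc (-l) (2*l) :=
    ⟨by linarith [ht'.1], by linarith [ht'.2.le]⟩
  have hst' : s' - t' = x' := by rw [hs'def]; ring
  have hgoal : ‖γ s - γ t‖ = ‖γ s' - γ t'‖ := by rw [hs'γ, htγ]
  rw [hgoal]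
  have hnd_x : nd ≤ |x'| := hndle
  by_cases hcase : |x'| ≤ δ
  · have hA := stepA s' t' hmem_s hmem_t (by rw [hst']; exact hcase)
    rw [hst'] at hA
    have hc2 : c ≤ 1/2 := min_le_left _ _
    nlinarith
  · have hmem : (s', t') ∈ S := by
      refine ⟨⟨hmem_s, ⟨ht'.1, ht'.2.le⟩⟩, ?_, ?_⟩
      · show δ ≤ |s' - t'|
        rw [hst']; exact (not_le.1 hcase).le
      · show |s' - t'| ≤ l - δ
        rw [hst']; linarith
    have hB : m₀ ≤ ‖γ s' - γ t'‖ := hm₀ (s', t') hmem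
    have hcm : c ≤ m₀/l := min_le_right _ _
    have hndl : nd ≤ l := by linarith
    have : c * nd ≤ (m₀/l) * l :=
      mul_le_mul hcm hndl hndnn (le_of_lt (div_pos hm₀pos hl))
    rw [div_mul_cancel₀ _ hl.ne'] at this
    linarith
end

section
/- For every x ∈ D there exists a differentiable curve u : [0, ∞) → ℝ^N such that u(0) = x, u(t) ∈ D for all t ≥ 0, u'(t) = −∇V(u(t)) for all t ≥ 0, and the function t ↦ V(u(t)) is non-increasing on [0, ∞); in particular, the gradient flow of V starting in D exists globally in time and never reaches the boundary of D. -/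
open Finset

namespace GFlow
open Finset Set Metric

lemma chord_le {γ : ℝ → ℂ} (hγ : ContDiff ℝ 2 γ) (hunit : ∀ t, ‖deriv γ t‖ = 1)
    (a b : ℝ) : ‖γ b - γ a‖ ≤ |b - a| := by
  have key : ∀ u v : ℝ, u ≤ v → ‖γ v - γ u‖ ≤ |v - u| := by
    intro u v huv
    have := norm_image_sub_le_of_norm_deriv_le_segment' (f := γ) (f' := deriv γ) (a := u) (b := v)
      (fun s _ => ((hγ.differentiable (by norm_num)) s).hasDerivAt.hasDerivWithinAt)
      (fun s _ => (hunit s).le) v (right_mem_Icc.2 huv)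
    simpa [abs_of_nonneg (sub_nonneg.2 huv)] using this
  rcases le_total a b with hab | hab
  · exact key a b hab
  · rw [norm_sub_rev, abs_sub_comm]; exact key b a hab

lemma gamma_ne {l : ℝ} (hl : 0 < l) {γ : ℝ → ℂ} (hper : Function.Periodic γ l)
    (hinj : Set.InjOn γ (Set.Ico 0 l)) {a b : ℝ} (h1 : a < b) (h2 : b < a + l) :
    γ a ≠ γ b := by
  set k := ⌊a / l⌋ with hk
  have ha0 : 0 ≤ a - k * l := Int.sub_floor_div_mul_nonneg a hl
  have ha1 : a - k * l < l := Int.sub_floor_div_mul_lt a hl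
  have hga : γ (a - k * l) = γ a := hper.sub_int_mul_eq k
  have hgb : γ (b - k * l) = γ b := hper.sub_int_mul_eq k
  rcases lt_or_ge (b - k * l) l with h | h
  · intro hcon
    have := hinj ⟨ha0, ha1⟩ ⟨by linarith, h⟩ (by rw [hga, hgb, hcon])
    linarith
  · intro hcon
    have hgb' : γ (b - k * l - l) = γ b := by rw [← hgb]; exact hper.sub_eq _
    have hmem1 : b - k * l - l ∈ Set.Ico (0:ℝ) l := ⟨by linarith, by linarith⟩
    have := hinj hmem1 ⟨ha0, ha1⟩ (by rw [hgb', hga, hcon])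
    linarith

lemma fderiv_shift {E : Type*} [NormedAddCommGroup E] [NormedSpace ℝ E]
    (f : E → ℝ) (v : E) (x : E) :
    fderiv ℝ (fun y => f (y + v)) x = fderiv ℝ f (x + v) := by
  by_cases h : DifferentiableAt ℝ f (x + v)
  · have h1 : HasFDerivAt (fun y : E => y + v) (ContinuousLinearMap.id ℝ E) x := by
      simpa using (hasFDerivAt_id x).add_const v
    have h2 := (h.hasFDerivAt.comp x h1)
    simpa [Function.comp_def] using h2.fderiv
  · rw [fderiv_zero_of_not_differentiableAt h, fderiv_zero_of_not_differentiableAt]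
    intro hcon
    apply h
    have h2 : HasFDerivAt (fun y : E => y + (-v)) (ContinuousLinearMap.id ℝ E) (x + v) := by
      simpa using (hasFDerivAt_id (x + v)).add_const (-v)
    have hcon' : DifferentiableAt ℝ (fun y => f (y + v)) (x + v + -v) := by
      rw [show x + v + -v = x from by abel]; exact hcon
    have h3 := hcon'.comp (x + v) h2.differentiableAt
    have : (fun y => f (y + v)) ∘ (fun y : E => y + (-v)) = f := by
      funext y; simp
    rwa [this] at h3

lemma coord_le_norm {N : ℕ} (y : EuclideanSpace ℝ (Fin N)) (i : Fin N) : |y i| ≤ ‖y‖ := by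
  rw [EuclideanSpace.norm_eq]
  have h1 : |y i| = Real.sqrt (‖y i‖ ^ 2) := by
    rw [Real.sqrt_sq_eq_abs, abs_norm, Real.norm_eq_abs]
  rw [h1]
  apply Real.sqrt_le_sqrt
  exact Finset.single_le_sum (f := fun j => ‖y j‖ ^ 2) (fun j _ => by positivity) (mem_univ i)

lemma norm_le_of_coord {N : ℕ} (y : EuclideanSpace ℝ (Fin N)) (b : ℝ) (hb : 0 ≤ b)
    (h : ∀ i, |y i| ≤ b) : ‖y‖ ≤ Real.sqrt (N * b ^ 2) := by
  rw [EuclideanSpace.norm_eq]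
  apply Real.sqrt_le_sqrt
  calc ∑ i, ‖y i‖ ^ 2 ≤ ∑ _i : Fin N, b ^ 2 :=
        Finset.sum_le_sum fun i _ => by
          rw [Real.norm_eq_abs]
          exact pow_le_pow_left₀ (abs_nonneg _) (h i) 2
    _ = N * b ^ 2 := by simp [Finset.card_univ]

lemma clamp_lip (Mc a b : ℝ) :
    |max (-Mc) (min Mc a) - max (-Mc) (min Mc b)| ≤ |a - b| := by
  have h1 : |min Mc a - min Mc b| ≤ |a - b| := by
    have := abs_min_sub_min_le_max Mc a Mc b
    simpa using this
  calc |max (-Mc) (min Mc a) - max (-Mc) (min Mc b)|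
      = |max (min Mc a) (-Mc) - max (min Mc b) (-Mc)| := by rw [max_comm, max_comm (min Mc b)]
    _ ≤ |min Mc a - min Mc b| := abs_max_sub_max_le_abs _ _ _
    _ ≤ |a - b| := h1

lemma isOpen_U (γ : ℝ → ℂ) (hγ : Continuous γ) (N : ℕ) :
    IsOpen {y : EuclideanSpace ℝ (Fin N) | ∀ i j : Fin N, i < j → γ (y i) ≠ γ (y j)} := by
  have hEq : {y : EuclideanSpace ℝ (Fin N) | ∀ i j : Fin N, i < j → γ (y i) ≠ γ (y j)} =
      ⋂ i, ⋂ j, {y : EuclideanSpace ℝ (Fin N) | i < j → γ (y i) ≠ γ (y j)} := by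
    ext y; simp [Set.mem_iInter, Set.mem_setOf_eq]
  rw [hEq]
  refine isOpen_iInter_of_finite fun i => isOpen_iInter_of_finite fun j => ?_
  by_cases hij : i < j
  · have h2 : {y : EuclideanSpace ℝ (Fin N) | i < j → γ (y i) ≠ γ (y j)} =
        (fun y : EuclideanSpace ℝ (Fin N) => γ (EuclideanSpace.proj i y) -
          γ (EuclideanSpace.proj j y)) ⁻¹' {0}ᶜ := by
      ext y; simp [hij, sub_eq_zero]
    rw [h2]
    exact isOpen_compl_singleton.preimage
      ((hγ.comp (EuclideanSpace.proj i).continuous).sub (hγ.comp (EuclideanSpace.proj j).continuous))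
  · convert isOpen_univ
    ext y; simp [hij]

lemma contDiffOn_V {γ : ℝ → ℂ} (hγ : ContDiff ℝ 2 γ) {N : ℕ}
    (P : Finset (Fin N × Fin N)) (hP : ∀ p ∈ P, p.1 < p.2) :
    ContDiffOn ℝ 2 (fun y : EuclideanSpace ℝ (Fin N) => -∑ p ∈ P, Real.log ‖γ (y p.1) - γ (y p.2)‖)
      {y : EuclideanSpace ℝ (Fin N) | ∀ i j : Fin N, i < j → γ (y i) ≠ γ (y j)} := by
  apply ContDiffOn.neg
  apply ContDiffOn.sum
  intro p hp y hy
  apply ContDiffAt.contDiffWithinAt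
  have hg : ContDiff ℝ 2 fun y : EuclideanSpace ℝ (Fin N) => γ (y p.1) - γ (y p.2) := by
    have h1 := (hγ.comp (EuclideanSpace.proj (𝕜 := ℝ) p.1).contDiff).sub
      (hγ.comp (EuclideanSpace.proj (𝕜 := ℝ) p.2).contDiff)
    simpa [Function.comp_def] using h1
  have hne : γ (y p.1) - γ (y p.2) ≠ 0 := sub_ne_zero.2 (hy p.1 p.2 (hP p hp))
  have hnorm : ContDiffAt ℝ 2 (fun z : EuclideanSpace ℝ (Fin N) => ‖γ (z p.1) - γ (z p.2)‖) y :=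
    hg.contDiffAt.norm ℝ hne
  exact (Real.contDiffAt_log.mpr (norm_ne_zero_iff.mpr hne)).comp y hnorm

variable {N : ℕ}

/-- constant vector -/
noncomputable def cvec (N : ℕ) (c : ℝ) : EuclideanSpace ℝ (Fin N) := (WithLp.equiv 2 _).symm (fun _ => c)

@[simp] lemma cvec_apply (c : ℝ) (i : Fin N) : cvec N c i = c := rfl

/-- margin set -/
def Qmar (N : ℕ) (i0 : Fin N) (l d : ℝ) : Set (EuclideanSpace ℝ (Fin N)) :=
  {y | (∀ i j : Fin N, i < j → y i + d ≤ y j) ∧ (∀ i : Fin N, y i ≤ y i0 + l - d)}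

def Qbd (N : ℕ) (i0 : Fin N) (l d a b : ℝ) : Set (EuclideanSpace ℝ (Fin N)) :=
  {y | y ∈ Qmar N i0 l d ∧ a ≤ y i0 ∧ y i0 ≤ b}

def Qop (N : ℕ) (i0 : Fin N) (l d a b : ℝ) : Set (EuclideanSpace ℝ (Fin N)) :=
  {y | (∀ i j : Fin N, i < j → y i + d < y j) ∧ (∀ i : Fin N, y i < y i0 + l - d) ∧
    a < y i0 ∧ y i0 < b}

variable {i0 : Fin N} {l d d' a b a' b' : ℝ}

lemma Qop_subset_Qbd : Qop N i0 l d a b ⊆ Qbd N i0 l d a b :=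
  fun y hy => ⟨⟨fun i j hij => (hy.1 i j hij).le, fun i => (hy.2.1 i).le⟩, hy.2.2.1.le, hy.2.2.2.le⟩

lemma Qbd_subset_Qop (hd : d' < d) (ha : a' < a) (hb : b < b') :
    Qbd N i0 l d a b ⊆ Qop N i0 l d' a' b' := by
  intro y hy
  exact ⟨fun i j hij => lt_of_lt_of_le (by linarith) (hy.1.1 i j hij),
    fun i => lt_of_le_of_lt (hy.1.2 i) (by linarith),
    lt_of_lt_of_le ha hy.2.1, lt_of_le_of_lt hy.2.2 hb⟩

lemma Qbd_mono (hd : d' ≤ d) (ha : a' ≤ a) (hb : b ≤ b') :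
    Qbd N i0 l d a b ⊆ Qbd N i0 l d' a' b' := by
  intro y hy
  exact ⟨⟨fun i j hij => le_trans (by linarith) (hy.1.1 i j hij),
    fun i => le_trans (hy.1.2 i) (by linarith)⟩, le_trans ha hy.2.1, le_trans hy.2.2 hb⟩

lemma continuous_coord (i : Fin N) : Continuous fun y : EuclideanSpace ℝ (Fin N) => y i :=
  (EuclideanSpace.proj (𝕜 := ℝ) i).continuous

lemma convex_Qbd : Convex ℝ (Qbd N i0 l d a b) := by
  intro y hy z hz α β hα hβ hαβ
  have hco : ∀ i : Fin N, (α • y + β • z) i = α * y i + β * z i := by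
    intro i; simp [PiLp.add_apply, PiLp.smul_apply, smul_eq_mul]
  have hcomb : ∀ c : ℝ, α * c + β * c = c := by
    intro c; rw [← add_mul, hαβ, one_mul]
  refine ⟨⟨fun i j hij => ?_, fun i => ?_⟩, ?_, ?_⟩
  · have h1 := hy.1.1 i j hij; have h2 := hz.1.1 i j hij
    rw [hco, hco]
    linarith [mul_le_mul_of_nonneg_left h1 hα, mul_le_mul_of_nonneg_left h2 hβ, hcomb d]
  · have h1 := hy.1.2 i; have h2 := hz.1.2 i
    rw [hco, hco]
    linarith [mul_le_mul_of_nonneg_left h1 hα, mul_le_mul_of_nonneg_left h2 hβ, hcomb (l - d),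
      hco i0]
  · have h1 := hy.2.1; have h2 := hz.2.1
    rw [hco]
    linarith [mul_le_mul_of_nonneg_left h1 hα, mul_le_mul_of_nonneg_left h2 hβ, hcomb a]
  · have h1 := hy.2.2; have h2 := hz.2.2
    rw [hco]
    linarith [mul_le_mul_of_nonneg_left h1 hα, mul_le_mul_of_nonneg_left h2 hβ, hcomb b]

lemma isClosed_Qbd : IsClosed (Qbd N i0 l d a b) := by
  have h1 : Qbd N i0 l d a b =
      (⋂ i, ⋂ j, {y : EuclideanSpace ℝ (Fin N) | i < j → y i + d ≤ y j}) ∩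
      ((⋂ i, {y : EuclideanSpace ℝ (Fin N) | y i ≤ y i0 + l - d}) ∩
        ({y : EuclideanSpace ℝ (Fin N) | a ≤ y i0} ∩ {y | y i0 ≤ b})) := by
    ext y
    simp only [Qbd, Qmar, Set.mem_inter_iff, Set.mem_iInter, Set.mem_setOf_eq]
    tauto
  rw [h1]
  refine IsClosed.inter (isClosed_iInter fun i => isClosed_iInter fun j => ?_)
    (IsClosed.inter (isClosed_iInter fun i => ?_) (IsClosed.inter ?_ ?_))
  · by_cases hij : i < j
    · have h2 : {y : EuclideanSpace ℝ (Fin N) | i < j → y i + d ≤ y j} =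
          {y : EuclideanSpace ℝ (Fin N) | y i + d ≤ y j} := by ext y; simp [hij]
      rw [h2]
      exact isClosed_le ((continuous_coord i).add continuous_const) (continuous_coord j)
    · have h2 : {y : EuclideanSpace ℝ (Fin N) | i < j → y i + d ≤ y j} = Set.univ := by
        ext y; simp [hij]
      rw [h2]; exact isClosed_univ
  · exact isClosed_le (continuous_coord i) (((continuous_coord i0).add continuous_const).sub continuous_const)
  · exact isClosed_le continuous_const (continuous_coord i0)
  · exact isClosed_le (continuous_coord i0) continuous_const

lemma isOpen_Qop : IsOpen (Qop N i0 l d a b) := by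
  have h1 : Qop N i0 l d a b =
      (⋂ i, ⋂ j, {y : EuclideanSpace ℝ (Fin N) | i < j → y i + d < y j}) ∩
      ((⋂ i, {y : EuclideanSpace ℝ (Fin N) | y i < y i0 + l - d}) ∩
        ({y : EuclideanSpace ℝ (Fin N) | a < y i0} ∩ {y | y i0 < b})) := by
    ext y
    simp only [Qop, Set.mem_inter_iff, Set.mem_iInter, Set.mem_setOf_eq]
    try tauto
  rw [h1]
  refine IsOpen.inter (isOpen_iInter_of_finite fun i => isOpen_iInter_of_finite fun j => ?_)
    (IsOpen.inter (isOpen_iInter_of_finite fun i => ?_) (IsOpen.inter ?_ ?_))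
  · by_cases hij : i < j
    · have h2 : {y : EuclideanSpace ℝ (Fin N) | i < j → y i + d < y j} =
          {y : EuclideanSpace ℝ (Fin N) | y i + d < y j} := by ext y; simp [hij]
      rw [h2]
      exact isOpen_lt ((continuous_coord i).add continuous_const) (continuous_coord j)
    · have h2 : {y : EuclideanSpace ℝ (Fin N) | i < j → y i + d < y j} = Set.univ := by
        ext y; simp [hij]
      rw [h2]; exact isOpen_univ
  · exact isOpen_lt (continuous_coord i) (((continuous_coord i0).add continuous_const).sub continuous_const)
  · exact isOpen_lt continuous_const (continuous_coord i0)
  · exact isOpen_lt (continuous_coord i0) continuous_const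

lemma coord_ge_base (hi0 : ∀ i : Fin N, i0 ≤ i) (hd : 0 ≤ d)
    {y : EuclideanSpace ℝ (Fin N)} (hy : y ∈ Qmar N i0 l d) (i : Fin N) : y i0 ≤ y i := by
  rcases eq_or_ne i i0 with rfl | hne
  · exact le_refl _
  · have := hy.1 i0 i (lt_of_le_of_ne (hi0 i) (Ne.symm hne))
    linarith

lemma isCompact_Qbd (hi0 : ∀ i : Fin N, i0 ≤ i) (hd : 0 ≤ d) :
    IsCompact (Qbd N i0 l d a b) := by
  apply isCompact_of_isClosed_isBounded isClosed_Qbd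
  rw [Metric.isBounded_iff_subset_closedBall (cvec N a)]
  refine ⟨Real.sqrt (N * (max (b - a + l) 0) ^ 2), fun y hy => ?_⟩
  rw [Metric.mem_closedBall, dist_eq_norm]
  apply norm_le_of_coord _ _ (le_max_right _ _)
  intro i
  have h1 : y i0 ≤ y i := coord_ge_base hi0 hd hy.1 i
  have h2 : y i ≤ y i0 + l - d := hy.1.2 i
  have h3 : (y - cvec N a) i = y i - a := by simp [PiLp.sub_apply]
  rw [h3, abs_le]
  have hb0 : (0:ℝ) ≤ max (b - a + l) 0 := le_max_right _ _
  have h4 := hy.2.1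
  have h5 := hy.2.2
  constructor
  · linarith
  · have h6 : y i - a ≤ b - a + l := by linarith
    exact le_trans h6 (le_max_left _ _)

lemma exists_extension {N : ℕ} (K' : Set (EuclideanSpace ℝ (Fin N)))
    (G : EuclideanSpace ℝ (Fin N) → EuclideanSpace ℝ (Fin N)) (L : NNReal)
    (hG : LipschitzOnWith L G K') (Mb : ℝ) (hMb : 0 ≤ Mb) (hGb : ∀ y ∈ K', ‖G y‖ ≤ Mb) :
    ∃ F : EuclideanSpace ℝ (Fin N) → EuclideanSpace ℝ (Fin N),
      (∀ y ∈ K', F y = G y) ∧ (∀ y, ‖F y‖ ≤ Real.sqrt (N * Mb ^ 2)) ∧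
      LipschitzWith (L * NNReal.sqrt N) F := by
  have hcomp : ∀ i : Fin N, LipschitzOnWith L (fun y => G y i) K' := by
    intro i
    apply LipschitzOnWith.of_dist_le_mul
    intro y hy z hz
    calc dist (G y i) (G z i) ≤ dist (G y) (G z) := by
          rw [Real.dist_eq, dist_eq_norm]
          have : G y i - G z i = (G y - G z) i := by simp [PiLp.sub_apply]
          rw [this]
          exact coord_le_norm _ i
      _ ≤ L * dist y z := hG.dist_le_mul y hy z hz
  choose g hgl hge using fun i : Fin N => (hcomp i).extend_real
  set F : EuclideanSpace ℝ (Fin N) → EuclideanSpace ℝ (Fin N) :=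
    fun y => (WithLp.equiv 2 _).symm (fun i => max (-Mb) (min Mb (g i y))) with hF
  have hFapp : ∀ y i, F y i = max (-Mb) (min Mb (g i y)) := fun y i => rfl
  refine ⟨F, ?_, ?_, ?_⟩
  · intro y hy
    have : ∀ i, F y i = G y i := by
      intro i
      rw [hFapp, ← hge i hy]
      have h1 : |G y i| ≤ Mb := le_trans (coord_le_norm _ i) (hGb y hy)
      rw [abs_le] at h1
      rw [min_eq_right h1.2, max_eq_right h1.1]
    ext i
    exact this i
  · intro y
    apply norm_le_of_coord _ _ hMb
    intro i
    rw [hFapp, abs_le]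
    constructor
    · exact le_max_left _ _
    · exact max_le (by linarith) (min_le_left _ _)
  · apply LipschitzWith.of_dist_le_mul
    intro y z
    have hcoord : ∀ i, dist (F y i) (F z i) ≤ L * dist y z := by
      intro i
      rw [Real.dist_eq, hFapp, hFapp]
      calc |max (-Mb) (min Mb (g i y)) - max (-Mb) (min Mb (g i z))| ≤ |g i y - g i z| :=
            clamp_lip Mb _ _
        _ ≤ L * dist y z := by
            rw [← Real.dist_eq]
            exact (hgl i).dist_le_mul y z
    rw [EuclideanSpace.dist_eq]
    have h1 : ∑ i, dist (F y i) (F z i) ^ 2 ≤ (N : ℝ) * (L * dist y z) ^ 2 := by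
      calc ∑ i, dist (F y i) (F z i) ^ 2 ≤ ∑ _i : Fin N, (L * dist y z) ^ 2 :=
            Finset.sum_le_sum fun i _ => by
              have := hcoord i
              have h0 : (0:ℝ) ≤ dist (F y i) (F z i) := dist_nonneg
              nlinarith
        _ = (N : ℝ) * (L * dist y z) ^ 2 := by simp [Finset.card_univ]
    calc Real.sqrt (∑ i, dist (F y i) (F z i) ^ 2) ≤ Real.sqrt ((N : ℝ) * (L * dist y z) ^ 2) :=
          Real.sqrt_le_sqrt h1
      _ = Real.sqrt N * (L * dist y z) := by
          rw [Real.sqrt_mul (Nat.cast_nonneg N), Real.sqrt_sq (by positivity)]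
      _ = (L * NNReal.sqrt N : NNReal) * dist y z := by
          push_cast [Real.coe_sqrt]
          ring
  
lemma exists_global_solution {E : Type*} [NormedAddCommGroup E] [NormedSpace ℝ E] [CompleteSpace E]
    (F : E → E) (L : NNReal) (hF : LipschitzWith L F) (C : ℝ)
    (hFb : ∀ y, ‖F y‖ ≤ C) (x0 : E) (T : ℝ) (hT : 0 < T) :
    ∃ f : ℝ → E, f 0 = x0 ∧ ∀ t ∈ Icc (0:ℝ) T, HasDerivWithinAt f (F (f t)) (Icc 0 T) t := by
  have hC : 0 ≤ C := le_trans (norm_nonneg _) (hFb x0)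
  have hpl : IsPicardLindelof (fun _ : ℝ => F) (tmin := 0) (tmax := T) ⟨0, ⟨le_refl 0, hT.le⟩⟩ x0
      ⟨C * T, by positivity⟩ 0 ⟨C, hC⟩ L :=
    IsPicardLindelof.of_time_independent (fun x _ => hFb x) hF.lipschitzOnWith
      (by simp [max_eq_left hT.le]; exact le_rfl)
  exact hpl.exists_eq_forall_mem_Icc_hasDerivWithinAt₀

end GFlow

open Set Metric Topology

set_option maxHeartbeats 1000000

/-- Global existence of the gradient flow of `V` in `D`: for every `x ∈ D` there
is a curve `u` with `u(0) = x`, `u(t) ∈ D` and `u'(t) = −∇V(u(t))` for all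
`t ≥ 0`, along which `V` is non-increasing. -/
theorem gradient_flow_global_existence
    (l : ℝ) (hl : 0 < l)
    (γ : ℝ → ℂ) (hγ : ContDiff ℝ 2 γ) (hper : Function.Periodic γ l)
    (hinj : Set.InjOn γ (Set.Ico 0 l)) (hunit : ∀ t, ‖deriv γ t‖ = 1)
    (N : ℕ) (hN : 2 ≤ N)
    (D : Set (EuclideanSpace ℝ (Fin N)))
    (hD : D = {x | (∀ i j : Fin N, i < j → x i < x j) ∧
      ∀ i : Fin N, x i < x ⟨0, by omega⟩ + l})
    (V : EuclideanSpace ℝ (Fin N) → ℝ)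
    (hV : V = fun x => -∑ p ∈ Finset.univ.filter (fun p : Fin N × Fin N => p.1 < p.2),
      Real.log ‖γ (x p.1) - γ (x p.2)‖) :
    ∀ x ∈ D, ∃ u : ℝ → EuclideanSpace ℝ (Fin N),
      u 0 = x ∧ (∀ t : ℝ, 0 ≤ t → u t ∈ D) ∧
      (∀ t : ℝ, 0 ≤ t → HasDerivWithinAt u (-(gradient V (u t))) (Set.Ici 0) t) ∧
      AntitoneOn (fun t => V (u t)) (Set.Ici 0) := by
  intro x0 hx0
  classical
  set i0 : Fin N := ⟨0, by omega⟩ with hi0def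
  have hi0le : ∀ i : Fin N, i0 ≤ i := fun i => by
    simp only [hi0def, Fin.le_def]; omega
  have hi0lt : ∀ i : Fin N, i ≠ i0 → i0 < i := fun i hi => lt_of_le_of_ne (hi0le i) (Ne.symm hi)
  have hDmem : ∀ y : EuclideanSpace ℝ (Fin N),
      y ∈ D ↔ (∀ i j : Fin N, i < j → y i < y j) ∧ (∀ i : Fin N, y i < y i0 + l) := by
    intro y; rw [hD]; exact Iff.rfl
  set P : Finset (Fin N × Fin N) :=
    Finset.univ.filter (fun p : Fin N × Fin N => p.1 < p.2) with hPdef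
  have hPmem : ∀ p ∈ P, p.1 < p.2 := fun p hp => (Finset.mem_filter.1 hp).2
  have hVy : ∀ y, V y = -∑ p ∈ P, Real.log ‖γ (y p.1) - γ (y p.2)‖ := by
    intro y; rw [hV]
  -- gaps in D
  have hgap : ∀ y ∈ D, ∀ i j : Fin N, i < j → 0 < y j - y i ∧ y j - y i < l := by
    intro y hy i j hij
    obtain ⟨h1, h2⟩ := (hDmem y).1 hy
    refine ⟨by linarith [h1 i j hij], ?_⟩
    have hi0i : y i0 ≤ y i := by
      rcases eq_or_ne i i0 with rfl | hne
      · exact le_refl _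
      · exact (h1 i0 i (hi0lt i hne)).le
    linarith [h2 j]
  set U : Set (EuclideanSpace ℝ (Fin N)) :=
    {y | ∀ i j : Fin N, i < j → γ (y i) ≠ γ (y j)} with hUdef
  have hDU : D ⊆ U := by
    intro y hy i j hij
    obtain ⟨hg1, hg2⟩ := hgap y hy i j hij
    exact GFlow.gamma_ne hl hper hinj (by linarith) (by linarith)
  have hUopen : IsOpen U := GFlow.isOpen_U γ hγ.continuous N
  have hVC2 : ContDiffOn ℝ 2 V U := by
    rw [hV, hUdef]
    exact GFlow.contDiffOn_V hγ P hPmem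
  have hVdiffAt : ∀ y ∈ U, DifferentiableAt ℝ V y := fun y hy =>
    (hVC2.contDiffAt (hUopen.mem_nhds hy)).differentiableAt (by norm_num)
  have hgradAt : ∀ y ∈ U, HasFDerivAt V
      ((InnerProductSpace.toDual ℝ (EuclideanSpace ℝ (Fin N))) (gradient V y)) y := fun y hy =>
    (hVdiffAt y hy).hasGradientAt.hasFDerivAt
  have hfderivC1 : ContDiffOn ℝ 1 (fderiv ℝ V) U := hVC2.fderiv_of_isOpen hUopen (by norm_num)
  have hgradnorm : ∀ y, ‖gradient V y‖ = ‖fderiv ℝ V y‖ := fun y =>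
    LinearIsometryEquiv.norm_map _ _
  -- constants
  set c := V x0 with hcdef
  have hPne : P.Nonempty := by
    refine ⟨(i0, ⟨1, by omega⟩), Finset.mem_filter.2 ⟨Finset.mem_univ _, ?_⟩⟩
    simp only [hi0def, Fin.mk_lt_mk]
    omega
  have hcard1 : 1 ≤ P.card := Finset.card_pos.2 hPne
  set δ0 := Real.exp (-(c + ((P.card : ℝ) - 1) * Real.log l)) with hδ0def
  set δ := min δ0 l with hδdef
  have hδ0pos : 0 < δ0 := Real.exp_pos _
  have hδpos : 0 < δ := lt_min hδ0pos hl
  have hδl : δ ≤ l := min_le_right _ _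
  have hδδ0 : δ ≤ δ0 := min_le_left _ _
  -- chord bound and positivity
  have hchord : ∀ u v : ℝ, ‖γ u - γ v‖ ≤ |u - v| := fun u v => GFlow.chord_le hγ hunit v u
  have hpos : ∀ y ∈ D, ∀ p : Fin N × Fin N, p.1 < p.2 → 0 < ‖γ (y p.1) - γ (y p.2)‖ := by
    intro y hy p hp
    rw [norm_pos_iff, sub_ne_zero]
    exact hDU hy p.1 p.2 hp
  have hle : ∀ y ∈ D, ∀ p : Fin N × Fin N, p.1 < p.2 →
      ‖γ (y p.1) - γ (y p.2)‖ ≤ y p.2 - y p.1 := by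
    intro y hy p hp
    have h1 := hchord (y p.1) (y p.2)
    obtain ⟨hg1, _⟩ := hgap y hy p.1 p.2 hp
    rwa [abs_sub_comm, abs_of_pos hg1] at h1
  -- key sublevel estimate
  have hKey : ∀ y ∈ D, V y ≤ c →
      (∀ i j : Fin N, i < j → y i + δ ≤ y j) ∧ (∀ i : Fin N, y i ≤ y i0 + l - δ) := by
    intro y hy hVyc
    have hpair : ∀ q ∈ P, δ0 ≤ ‖γ (y q.1) - γ (y q.2)‖ := by
      intro q hq
      have hterm : ∀ p ∈ P, Real.log ‖γ (y p.1) - γ (y p.2)‖ ≤ Real.log l := by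
        intro p hp
        apply Real.log_le_log (hpos y hy p (hPmem p hp))
        have h1 := hle y hy p (hPmem p hp)
        have h2 := hgap y hy p.1 p.2 (hPmem p hp)
        linarith [h2.2]
      have hsum : -c ≤ ∑ p ∈ P, Real.log ‖γ (y p.1) - γ (y p.2)‖ := by
        have h3 := hVy y
        rw [h3] at hVyc
        linarith
      have hrest : ∑ p ∈ P.erase q, Real.log ‖γ (y p.1) - γ (y p.2)‖ ≤
          ((P.card : ℝ) - 1) * Real.log l := by
        have h1 := Finset.sum_le_card_nsmul (P.erase q)
          (fun p => Real.log ‖γ (y p.1) - γ (y p.2)‖) (Real.log l)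
          (fun p hp => hterm p (Finset.mem_of_mem_erase hp))
        rw [Finset.card_erase_of_mem hq, nsmul_eq_mul, Nat.cast_sub hcard1] at h1
        simpa using h1
      have hsplit : Real.log ‖γ (y q.1) - γ (y q.2)‖ +
          ∑ p ∈ P.erase q, Real.log ‖γ (y p.1) - γ (y p.2)‖ =
          ∑ p ∈ P, Real.log ‖γ (y p.1) - γ (y p.2)‖ :=
        Finset.add_sum_erase P (fun p => Real.log ‖γ (y p.1) - γ (y p.2)‖) hq
      have hq' : -(c + ((P.card : ℝ) - 1) * Real.log l) ≤
          Real.log ‖γ (y q.1) - γ (y q.2)‖ := by linarith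
      calc δ0 = Real.exp (-(c + ((P.card : ℝ) - 1) * Real.log l)) := hδ0def
        _ ≤ Real.exp (Real.log ‖γ (y q.1) - γ (y q.2)‖) := Real.exp_le_exp.2 hq'
        _ = ‖γ (y q.1) - γ (y q.2)‖ := Real.exp_log (hpos y hy q (hPmem q hq))
    constructor
    · intro i j hij
      have h1 : δ0 ≤ ‖γ (y i) - γ (y j)‖ :=
        hpair (i, j) (Finset.mem_filter.2 ⟨Finset.mem_univ _, hij⟩)
      have h2 := hle y hy (i, j) hij
      simp only at h1 h2
      linarith
    · intro i
      rcases eq_or_ne i i0 with rfl | hne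
      · linarith
      · have hij : i0 < i := hi0lt i hne
        have h1 : δ0 ≤ ‖γ (y i0) - γ (y i)‖ :=
          hpair (i0, i) (Finset.mem_filter.2 ⟨Finset.mem_univ _, hij⟩)
        have h2 : ‖γ (y i) - γ (y i0 + l)‖ ≤ |y i - (y i0 + l)| := hchord _ _
        have h3 : γ (y i0 + l) = γ (y i0) := hper (y i0)
        have h4 : y i < y i0 + l := ((hDmem y).1 hy).2 i
        rw [h3] at h2
        rw [abs_sub_comm, abs_of_pos (by linarith)] at h2
        rw [norm_sub_rev] at h1
        linarith
  have hx0key := hKey x0 hx0 (le_refl c)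
  have hδhalf : (0:ℝ) < δ / 2 := by linarith
  -- Qbd facts
  have hQbdD : ∀ d a b : ℝ, 0 < d → GFlow.Qbd N i0 l d a b ⊆ D := by
    intro d a b hd y hy
    rw [hDmem]
    exact ⟨fun i j hij => by linarith [hy.1.1 i j hij],
      fun i => by linarith [hy.1.2 i]⟩
  have hQmarU : ∀ a b : ℝ, GFlow.Qbd N i0 l (δ/2) a b ⊆ U :=
    fun a b => (hQbdD _ a b hδhalf).trans hDU
  have hx0mar : x0 ∈ GFlow.Qmar N i0 l (δ/2) :=
    ⟨fun i j hij => by linarith [hx0key.1 i j hij], fun i => by linarith [hx0key.2 i]⟩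
  -- shift invariance
  have hcvec : ∀ (t : ℝ) (y : EuclideanSpace ℝ (Fin N)) (i : Fin N),
      (y + t • GFlow.cvec N 1) i = y i + t := by
    intro t y i
    simp [PiLp.add_apply, PiLp.smul_apply, GFlow.cvec_apply]
  have hshift_mem : ∀ (t : ℝ) y, y ∈ GFlow.Qmar N i0 l (δ/2) →
      y + t • GFlow.cvec N 1 ∈ GFlow.Qmar N i0 l (δ/2) := by
    intro t y hy
    exact ⟨fun i j hij => by rw [hcvec, hcvec]; linarith [hy.1 i j hij],
      fun i => by rw [hcvec, hcvec]; linarith [hy.2 i]⟩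
  have hγshift : ∀ (k : ℤ) (u : ℝ), γ (u + (k : ℝ) * l) = γ u := by
    intro k u
    have h1 := hper.sub_int_mul_eq (x := u + (k : ℝ) * l) k
    simpa using h1.symm
  have hVshift : ∀ (k : ℤ) (y), V (y + ((k : ℝ) * l) • GFlow.cvec N 1) = V y := by
    intro k y
    rw [hVy, hVy]
    congr 1
    apply Finset.sum_congr rfl
    intro p _
    rw [hcvec, hcvec, hγshift, hγshift]
  have hgradshift : ∀ (k : ℤ) (y),
      gradient V (y + ((k : ℝ) * l) • GFlow.cvec N 1) = gradient V y := by
    intro k y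
    have hfun : (fun z => V (z + ((k : ℝ) * l) • GFlow.cvec N 1)) = V :=
      funext fun z => hVshift k z
    have h1 := GFlow.fderiv_shift V (((k : ℝ) * l) • GFlow.cvec N 1) y
    rw [hfun] at h1
    show (InnerProductSpace.toDual ℝ (EuclideanSpace ℝ (Fin N))).symm
        (fderiv ℝ V (y + ((k : ℝ) * l) • GFlow.cvec N 1)) =
      (InnerProductSpace.toDual ℝ (EuclideanSpace ℝ (Fin N))).symm (fderiv ℝ V y)
    rw [← h1]
  -- uniform gradient bound on the margin set
  set P0 := GFlow.Qbd N i0 l (δ/2) (x0 i0) (x0 i0 + l) with hP0def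
  have hP0compact : IsCompact P0 := GFlow.isCompact_Qbd hi0le (by linarith)
  have hP0ne : P0.Nonempty := ⟨x0, hx0mar, le_refl _, by linarith⟩
  have hgradcont : ∀ a b : ℝ, ContinuousOn (fun y => ‖gradient V y‖)
      (GFlow.Qbd N i0 l (δ/2) a b) := by
    intro a b
    have h1 : (fun y => ‖gradient V y‖) = fun y => ‖fderiv ℝ V y‖ := funext hgradnorm
    rw [h1]
    exact (hfderivC1.continuousOn.mono (hQmarU a b)).norm
  obtain ⟨zM, hzM, hzMmax⟩ := hP0compact.exists_isMaxOn hP0ne (hgradcont _ _)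
  set Mb := ‖gradient V zM‖ with hMbdef
  have hMb0 : 0 ≤ Mb := norm_nonneg _
  have hMbound : ∀ y ∈ GFlow.Qmar N i0 l (δ/2), ‖gradient V y‖ ≤ Mb := by
    intro y hy
    set k := ⌊(y i0 - x0 i0) / l⌋ with hkdef
    have h0 : 0 ≤ (y i0 - x0 i0) - k * l := Int.sub_floor_div_mul_nonneg _ hl
    have h1 : (y i0 - x0 i0) - k * l < l := Int.sub_floor_div_mul_lt _ hl
    have hy' : y + ((-k : ℝ) * l) • GFlow.cvec N 1 ∈ P0 := by
      refine ⟨hshift_mem _ y hy, ?_, ?_⟩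
      · rw [hcvec]; push_cast; linarith
      · rw [hcvec]; push_cast; linarith
    have h2 : ‖gradient V (y + ((-k : ℝ) * l) • GFlow.cvec N 1)‖ ≤ Mb := hzMmax hy'
    have h3 : ((-k : ℝ) * l) = ((-k : ℤ) : ℝ) * l := by push_cast; ring
    rw [h3] at h2
    rw [hgradshift (-k) y] at h2
    exact h2
  -- Lipschitz constant of the (negative) gradient field on any Qbd set
  have hLipOn : ∀ a b : ℝ, ∃ Lc : NNReal,
      LipschitzOnWith Lc (fun y => -(gradient V y)) (GFlow.Qbd N i0 l (δ/2) a b) := by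
    intro a b
    rcases Set.eq_empty_or_nonempty (GFlow.Qbd N i0 l (δ/2) a b) with hemp | hne
    · exact ⟨0, by rw [hemp]; intro y hy; exact absurd hy (Set.notMem_empty y)⟩
    have hcomp : IsCompact (GFlow.Qbd N i0 l (δ/2) a b) := GFlow.isCompact_Qbd hi0le (by linarith)
    have hcont2 : ContinuousOn (fun y => ‖fderiv ℝ (fderiv ℝ V) y‖)
        (GFlow.Qbd N i0 l (δ/2) a b) :=
      ((hfderivC1.continuousOn_fderiv_of_isOpen hUopen le_rfl).mono (hQmarU a b)).norm
    obtain ⟨zL, hzL, hzLmax⟩ := hcomp.exists_isMaxOn hne hcont2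
    refine ⟨Real.toNNReal ‖fderiv ℝ (fderiv ℝ V) zL‖, ?_⟩
    have hLipf : LipschitzOnWith (Real.toNNReal ‖fderiv ℝ (fderiv ℝ V) zL‖) (fderiv ℝ V)
        (GFlow.Qbd N i0 l (δ/2) a b) := by
      apply Convex.lipschitzOnWith_of_nnnorm_fderiv_le
        (fun y hy => (hfderivC1.contDiffAt (hUopen.mem_nhds (hQmarU a b hy))).differentiableAt
          one_ne_zero)
        (fun y hy => ?_) GFlow.convex_Qbd
      rw [← norm_toNNReal]
      exact Real.toNNReal_mono (hzLmax hy : _)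
    intro y hy z hz
    rw [edist_neg_neg]
    calc edist (gradient V y) (gradient V z) = edist (fderiv ℝ V y) (fderiv ℝ V z) := by
          show edist ((InnerProductSpace.toDual ℝ (EuclideanSpace ℝ (Fin N))).symm _)
            ((InnerProductSpace.toDual ℝ (EuclideanSpace ℝ (Fin N))).symm _) = _
          exact (LinearIsometryEquiv.isometry _).edist_eq _ _
      _ ≤ _ := hLipf hy hz
  -- per-horizon solution
  have hSol : ∀ T : ℝ, 0 < T → ∃ f : ℝ → EuclideanSpace ℝ (Fin N), f 0 = x0 ∧
      (∀ t ∈ Icc (0:ℝ) T, f t ∈ GFlow.Qbd N i0 l δ (x0 i0 - Mb * T) (x0 i0 + Mb * T)) ∧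
      (∀ t ∈ Icc (0:ℝ) T, HasDerivWithinAt f (-(gradient V (f t))) (Icc 0 T) t) := by
    intro T hT
    set aT := x0 i0 - (Mb * T + 1) with haT
    set bT := x0 i0 + (Mb * T + 1) with hbT
    set K' := GFlow.Qbd N i0 l (δ/2) aT bT with hK'
    have hK'U : K' ⊆ U := hQmarU aT bT
    have hK'D : K' ⊆ D := hQbdD _ _ _ hδhalf
    obtain ⟨Lc, hGLip⟩ := hLipOn aT bT
    have hGbd : ∀ y ∈ K', ‖-(gradient V y)‖ ≤ Mb := by
      intro y hy; rw [norm_neg]; exact hMbound y hy.1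
    obtain ⟨F, hFeq, hFbd, hFlip⟩ := GFlow.exists_extension K' _ Lc hGLip Mb hMb0 hGbd
    obtain ⟨f, hf0, hfD⟩ := GFlow.exists_global_solution F _ hFlip _ hFbd x0 T hT
    set KT := GFlow.Qbd N i0 l δ (x0 i0 - Mb * T) (x0 i0 + Mb * T) with hKT
    set O := GFlow.Qop N i0 l (δ/2) aT bT with hO
    have hKTO : KT ⊆ O := GFlow.Qbd_subset_Qop (by linarith) (by rw [haT]; linarith)
      (by rw [hbT]; linarith)
    have hOK' : O ⊆ K' := GFlow.Qop_subset_Qbd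
    have hOopen : IsOpen O := GFlow.isOpen_Qop
    have hMT0 : 0 ≤ Mb * T := mul_nonneg hMb0 hT.le
    have hx0KT : x0 ∈ KT := ⟨⟨hx0key.1, hx0key.2⟩, by linarith, by linarith⟩
    have hfc : ContinuousOn f (Icc 0 T) := fun t ht => (hfD t ht).continuousWithinAt
    have hInv : ∀ t ∈ Icc (0:ℝ) T, f t ∈ KT := by
      set A := {t : ℝ | t ∈ Icc (0:ℝ) T ∧ ∀ s ∈ Icc (0:ℝ) t, f s ∈ KT} with hA
      have h0A : (0:ℝ) ∈ A := by
        refine ⟨⟨le_refl 0, hT.le⟩, fun s hs => ?_⟩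
        have : s = 0 := le_antisymm hs.2 hs.1
        rw [this, hf0]; exact hx0KT
      have hAne : A.Nonempty := ⟨0, h0A⟩
      have hAbdd : BddAbove A := ⟨T, fun t ht => ht.1.2⟩
      set τ := sSup A with hτ
      have hτ0 : 0 ≤ τ := le_csSup hAbdd h0A
      have hτT : τ ≤ T := csSup_le hAne (fun t ht => ht.1.2)
      have hAall : ∀ s, 0 ≤ s → s < τ → f s ∈ KT := by
        intro s hs0 hsτ
        obtain ⟨t, htA, hst⟩ := exists_lt_of_lt_csSup hAne hsτ
        exact htA.2 s ⟨hs0, hst.le⟩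
      have hτA : ∀ s ∈ Icc (0:ℝ) τ, f s ∈ KT := by
        intro s hs
        rcases lt_or_eq_of_le hs.2 with h | h
        · exact hAall s hs.1 h
        · rcases eq_or_lt_of_le hτ0 with heq | hτpos
          · rw [h, ← heq, hf0]; exact hx0KT
          · rw [h]
            have hclosed : IsClosed KT := GFlow.isClosed_Qbd
            have hne2 : (𝓝[Ico (0:ℝ) τ] τ).NeBot := right_nhdsWithin_Ico_neBot hτpos
            have hsub2 : Ico (0:ℝ) τ ⊆ Icc 0 T := fun z hz => ⟨hz.1, le_trans hz.2.le hτT⟩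
            apply hclosed.mem_of_tendsto
              ((hfc τ ⟨hτ0, hτT⟩).mono_left (nhdsWithin_mono τ hsub2))
            exact Filter.eventually_of_mem self_mem_nhdsWithin
              (fun z hz => hAall z hz.1 hz.2)
      have hτeq : τ = T := by
        by_contra hneq
        have hτltT : τ < T := lt_of_le_of_ne hτT hneq
        have hfτO : f τ ∈ O := hKTO (hτA τ ⟨hτ0, le_refl τ⟩)
        have hcw : ContinuousWithinAt f (Icc 0 T) τ := hfc τ ⟨hτ0, hτT⟩
        have hOmem : f ⁻¹' O ∈ 𝓝[Icc (0:ℝ) T] τ := by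
          have := hcw (hOopen.mem_nhds hfτO)
          rwa [Filter.mem_map] at this
        obtain ⟨ε, hε, hball⟩ := mem_nhdsWithin_iff.1 hOmem
        set t' := min (τ + ε/2) T with ht'def
        have hτt' : τ < t' := lt_min (by linarith) hτltT
        have ht'T : t' ≤ T := min_le_right _ _
        have ht'0 : 0 ≤ t' := le_trans hτ0 hτt'.le
        have hsO : ∀ s ∈ Icc (0:ℝ) t', f s ∈ O := by
          intro s hs
          rcases le_or_gt s τ with h | h
          · exact hKTO (hτA s ⟨hs.1, h⟩)
          · apply hball
            refine ⟨?_, hs.1, le_trans hs.2 ht'T⟩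
            rw [mem_ball, Real.dist_eq, abs_of_pos (by linarith)]
            have : s ≤ τ + ε/2 := le_trans hs.2 (min_le_left _ _)
            linarith
        have hfd' : ∀ s ∈ Icc (0:ℝ) t', HasDerivWithinAt f (-(gradient V (f s)))
            (Icc 0 t') s := by
          intro s hs
          have h1 := (hfD s ⟨hs.1, le_trans hs.2 ht'T⟩).mono (Icc_subset_Icc le_rfl ht'T)
          rwa [hFeq _ (hOK' (hsO s hs))] at h1
        -- V decreases along f on [0, t']
        have hmapsU : ∀ s ∈ Icc (0:ℝ) t', f s ∈ U := fun s hs => hK'U (hOK' (hsO s hs))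
        have hcontV : ContinuousOn (fun s => V (f s)) (Icc 0 t') := by
          apply hVC2.continuousOn.comp (hfc.mono (Icc_subset_Icc le_rfl ht'T)) hmapsU
        have hDerivAt : ∀ s ∈ Ioo (0:ℝ) t',
            HasDerivAt (fun s => V (f s)) (-‖gradient V (f s)‖ ^ 2) s := by
          intro s hs
          have hsIcc : s ∈ Icc (0:ℝ) t' := ⟨hs.1.le, hs.2.le⟩
          have h1 : HasDerivAt f (-(gradient V (f s))) s := by
            apply (hfd' s hsIcc).hasDerivAt
            exact Icc_mem_nhds hs.1 hs.2
          have h2 := (hgradAt (f s) (hmapsU s hsIcc)).comp_hasDerivAt s h1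
          have h3 : (InnerProductSpace.toDual ℝ (EuclideanSpace ℝ (Fin N)))
              (gradient V (f s)) (-(gradient V (f s))) = -‖gradient V (f s)‖ ^ 2 := by
            rw [InnerProductSpace.toDual_apply_apply, inner_neg_right, real_inner_self_eq_norm_sq]
          rwa [h3] at h2
        have hanti : AntitoneOn (fun s => V (f s)) (Icc 0 t') := by
          apply antitoneOn_of_deriv_nonpos (convex_Icc 0 t') hcontV
          · intro s hs
            rw [interior_Icc] at hs
            exact (hDerivAt s hs).differentiableAt.differentiableWithinAt
          · intro s hs
            rw [interior_Icc] at hs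
            rw [(hDerivAt s hs).deriv]
            simp [sq_nonneg]
        have hVdec : ∀ s ∈ Icc (0:ℝ) t', V (f s) ≤ c := by
          intro s hs
          have := hanti ⟨le_refl 0, ht'0⟩ hs hs.1
          simpa [hf0] using this
        -- coordinate drift
        have hdrift : ∀ s ∈ Icc (0:ℝ) t', |f s i0 - x0 i0| ≤ Mb * T := by
          intro s hs
          have hgd : ∀ s ∈ Icc (0:ℝ) t', HasDerivWithinAt (fun r => f r i0)
              ((-(gradient V (f s))) i0) (Icc 0 t') s := by
            intro s hs
            have h1 := (EuclideanSpace.proj (𝕜 := ℝ) i0).hasFDerivAt.comp_hasDerivWithinAt s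
              (hfd' s hs)
            simpa [Function.comp_def] using h1
          have hbound : ∀ s ∈ Ico (0:ℝ) t', ‖(-(gradient V (f s))) i0‖ ≤ Mb := by
            intro s hs
            have h1 : |(-(gradient V (f s))) i0| ≤ ‖-(gradient V (f s))‖ :=
              GFlow.coord_le_norm _ i0
            rw [norm_neg] at h1
            rw [Real.norm_eq_abs]
            exact le_trans h1 (hMbound _ (hOK' (hsO s ⟨hs.1, hs.2.le⟩)).1)
          have h2 := norm_image_sub_le_of_norm_deriv_le_segment' hgd hbound s hs
          rw [hf0] at h2
          rw [Real.norm_eq_abs] at h2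
          have h3 : Mb * (s - 0) ≤ Mb * T := by
            apply mul_le_mul_of_nonneg_left _ hMb0
            linarith [hs.2, ht'T]
          linarith
        have ht'A : t' ∈ A := by
          refine ⟨⟨ht'0, ht'T⟩, fun s hs => ?_⟩
          have hsD : f s ∈ D := hK'D (hOK' (hsO s hs))
          have hk := hKey (f s) hsD (hVdec s hs)
          have hd := hdrift s hs
          rw [abs_le] at hd
          exact ⟨⟨hk.1, hk.2⟩, by linarith [hd.1], by linarith [hd.2]⟩
        have := le_csSup hAbdd ht'A
        linarith
      intro t ht
      apply hτA
      rw [hτeq]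
      exact ht
    refine ⟨f, hf0, hInv, fun t ht => ?_⟩
    have h1 := hfD t ht
    rwa [hFeq _ (hOK' (hKTO (hInv t ht)))] at h1
  -- choose solutions for each horizon n+1
  choose fseq hfseq0 hfseqmem hfseqder using fun n : ℕ => hSol ((n : ℝ) + 1) (by positivity)
  -- uniqueness / compatibility
  have hUniq : ∀ m n : ℕ, m ≤ n → Set.EqOn (fseq m) (fseq n) (Icc 0 ((m : ℝ) + 1)) := by
    intro m n hmn
    have hcast : ((m : ℝ) + 1) ≤ ((n : ℝ) + 1) := by
      have : (m : ℝ) ≤ (n : ℝ) := Nat.cast_le.2 hmn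
      linarith
    obtain ⟨Lc, hLip⟩ := hLipOn (x0 i0 - (Mb * ((n : ℝ) + 1) + 1)) (x0 i0 + (Mb * ((n : ℝ) + 1) + 1))
    have hsub : ∀ k : ℕ, (k : ℝ) + 1 ≤ (n : ℝ) + 1 →
        GFlow.Qbd N i0 l δ (x0 i0 - Mb * ((k : ℝ) + 1)) (x0 i0 + Mb * ((k : ℝ) + 1)) ⊆
        GFlow.Qbd N i0 l (δ/2) (x0 i0 - (Mb * ((n : ℝ) + 1) + 1))
          (x0 i0 + (Mb * ((n : ℝ) + 1) + 1)) := by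
      intro k hk
      apply GFlow.Qbd_mono (by linarith)
      · have := mul_le_mul_of_nonneg_left hk hMb0
        linarith
      · have := mul_le_mul_of_nonneg_left hk hMb0
        linarith
    apply ODE_solution_unique_of_mem_Icc_right
      (v := fun _ y => -(gradient V y))
      (s := fun _ => GFlow.Qbd N i0 l (δ/2) (x0 i0 - (Mb * ((n : ℝ) + 1) + 1))
        (x0 i0 + (Mb * ((n : ℝ) + 1) + 1)))
      (fun _ _ => hLip)
    · exact fun t ht => (hfseqder m t ht).continuousWithinAt
    · intro t ht
      exact (hfseqder m t ⟨ht.1, ht.2.le⟩).mono_of_mem_nhdsWithin (Icc_mem_nhdsGE_of_mem ht)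
    · intro t ht
      exact hsub m hcast (hfseqmem m t ⟨ht.1, ht.2.le⟩)
    · exact fun t ht => ((hfseqder n t ⟨ht.1, le_trans ht.2 hcast⟩).continuousWithinAt).mono
        (Icc_subset_Icc le_rfl hcast)
    · intro t ht
      exact (hfseqder n t ⟨ht.1, le_trans ht.2.le hcast⟩).mono_of_mem_nhdsWithin
        (Icc_mem_nhdsGE_of_mem ⟨ht.1, lt_of_lt_of_le ht.2 hcast⟩)
    · intro t ht
      exact hsub n le_rfl (hfseqmem n t ⟨ht.1, le_trans ht.2.le hcast⟩)
    · rw [hfseq0 m, hfseq0 n]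
  -- the global curve
  have hagree : ∀ (n : ℕ) (t : ℝ), 0 ≤ t → t ≤ (n : ℝ) + 1 → fseq (⌊t⌋₊) t = fseq n t := by
    intro n t ht0 htn
    have hfl : t ≤ (⌊t⌋₊ : ℝ) + 1 := (Nat.lt_floor_add_one t).le
    rcases le_total (⌊t⌋₊) n with h | h
    · exact hUniq _ _ h ⟨ht0, hfl⟩
    · exact (hUniq n _ h ⟨ht0, htn⟩).symm
  set u0 : ℝ → EuclideanSpace ℝ (Fin N) := fun s => fseq (⌊s⌋₊) s with hu0def
  have hmemD : ∀ t : ℝ, 0 ≤ t → fseq (⌊t⌋₊) t ∈ D := fun t ht =>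
    hQbdD _ _ _ hδpos (hfseqmem (⌊t⌋₊) t ⟨ht, (Nat.lt_floor_add_one t).le⟩)
  have hder : ∀ t : ℝ, 0 ≤ t → HasDerivWithinAt u0
      (-(gradient V (fseq (⌊t⌋₊) t))) (Ici 0) t := by
    intro t ht
    have ht1 : t < (⌊t⌋₊ : ℝ) + 1 := Nat.lt_floor_add_one t
    have h1 := hfseqder (⌊t⌋₊) t ⟨ht, ht1.le⟩
    have hmemset : Iio ((⌊t⌋₊ : ℝ) + 1) ∩ Ici (0:ℝ) ∈ 𝓝[Ici (0:ℝ)] t :=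
      Filter.inter_mem (mem_nhdsWithin_of_mem_nhds (Iio_mem_nhds ht1)) self_mem_nhdsWithin
    have hmem2 : Icc (0:ℝ) ((⌊t⌋₊ : ℝ) + 1) ∈ 𝓝[Ici (0:ℝ)] t :=
      Filter.mem_of_superset hmemset (fun s hs => ⟨hs.2, hs.1.le⟩)
    have h2 := h1.mono_of_mem_nhdsWithin hmem2
    have hev : u0 =ᶠ[𝓝[Ici (0:ℝ)] t] fseq (⌊t⌋₊) := by
      apply Filter.eventuallyEq_of_mem hmemset
      intro s hs
      exact hagree (⌊t⌋₊) s hs.2 hs.1.le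
    exact h2.congr_of_eventuallyEq hev rfl
  have hucont : ContinuousOn u0 (Ici (0:ℝ)) :=
    fun t ht => (hder t ht).continuousWithinAt
  have hDerAt : ∀ t : ℝ, 0 < t →
      HasDerivAt (fun s => V (u0 s)) (-‖gradient V (u0 t)‖ ^ 2) t := by
    intro t ht
    have ht1 : t < (⌊t⌋₊ : ℝ) + 1 := Nat.lt_floor_add_one t
    have h1 := (hfseqder (⌊t⌋₊) t ⟨ht.le, ht1.le⟩).hasDerivAt (Icc_mem_nhds ht ht1)
    have hev : u0 =ᶠ[𝓝 t] fseq (⌊t⌋₊) := by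
      apply Filter.eventuallyEq_of_mem (Filter.inter_mem (Iio_mem_nhds ht1) (Ioi_mem_nhds ht))
      intro s hs
      exact hagree (⌊t⌋₊) s (le_of_lt hs.2) hs.1.le
    have h2 : HasDerivAt u0 (-(gradient V (u0 t))) t :=
      h1.congr_of_eventuallyEq hev
    have hmemU : u0 t ∈ U := hDU (hmemD t ht.le)
    have h3 := (hgradAt (u0 t) hmemU).comp_hasDerivAt t h2
    have h4 : (InnerProductSpace.toDual ℝ (EuclideanSpace ℝ (Fin N)))
        (gradient V (u0 t)) (-(gradient V (u0 t))) =
        -‖gradient V (u0 t)‖ ^ 2 := by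
      rw [InnerProductSpace.toDual_apply_apply, inner_neg_right, real_inner_self_eq_norm_sq]
    rwa [h4] at h3
  refine ⟨u0, ?_, ?_, ?_, ?_⟩
  · show fseq (⌊(0:ℝ)⌋₊) 0 = x0
    rw [show ⌊(0:ℝ)⌋₊ = 0 from by simp]
    exact hfseq0 0
  · exact hmemD
  · exact hder
  · apply antitoneOn_of_deriv_nonpos (convex_Ici 0)
    · exact hVC2.continuousOn.comp hucont (fun t ht => hDU (hmemD t ht))
    · intro t ht
      rw [interior_Ici] at ht
      exact (hDerAt t ht).differentiableAt.differentiableWithinAt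
    · intro t ht
      rw [interior_Ici] at ht
      rw [(hDerAt t ht).deriv]
      simp [sq_nonneg]
end
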